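/- arXiv:1509.02997 — 12 statements merged into one kernel-verified Lean document; each statement's English description precedes it below -/
import Mathlib

section
/- Let S and T be semirings and let f : S → T be a surjective semiring homomorphism. If S is a left CP-semiring, then T is a left CP-semiring. -/
universe u

/-- A left CP-semiring: every cyclic left `S`-semimodule is projective. -/
def IsLeftCPSemiring (S : Type u) [Semiring S] : Prop :=
  ∀ (M : Type u) [AddCommMonoid M] [Module S M],
    (∃ m : M, Submodule.span S {m} = ⊤) → Module.Projective S M

section SurjectiveRingHom

variable {S T M : Type*} [Semiring S] [Semiring T] [AddCommMonoid M] [Module S M] [Module T M]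
  {f : S →+* T}

theorem Submodule.span_singleton_eq_top_of_surjective_ringHom (hf : Function.Surjective f)
    (hsmul : ∀ (s : S) (x : M), f s • x = s • x) {m : M} (hm : Submodule.span T {m} = ⊤) :
    Submodule.span S {m} = ⊤ := by
  refine Submodule.eq_top_iff'.mpr fun x => ?_
  obtain ⟨t, rfl⟩ := Submodule.mem_span_singleton.mp (hm ▸ Submodule.mem_top : x ∈ _)
  obtain ⟨s, rfl⟩ := hf t
  exact Submodule.mem_span_singleton.mpr ⟨s, (hsmul s m).symm⟩

/-- The splitting `M → (M →₀ S)` of an `S`-projective module, pushed along `f`, is `T`-linear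
because every scalar of `T` comes from `S`. -/
theorem Module.Projective.of_surjective_ringHom (hf : Function.Surjective f)
    (hsmul : ∀ (s : S) (x : M), f s • x = s • x) [Module.Projective S M] :
    Module.Projective T M := by
  obtain ⟨σ, hσ⟩ := Module.projective_def.mp ‹Module.Projective S M›
  let τ : M →ₗ[T] M →₀ T :=
    { toFun := fun x => (σ x).mapRange f f.map_zero
      map_add' := fun x y => by simp only [map_add, Finsupp.mapRange_add (map_add f)]
      map_smul' := fun t x => by
        obtain ⟨s, rfl⟩ := hf t
        ext y
        simp [hsmul] }
  refine Module.projective_def.mpr ⟨τ, fun x => ?_⟩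
  conv_rhs => rw [← hσ x]
  simp [τ, Finsupp.linearCombination_apply, Finsupp.sum_mapRange_index, hsmul]

end SurjectiveRingHom

/-- a surjective homomorphic image of a left CP-semiring is a
left CP-semiring. -/
theorem homomorphicImage_isLeftCPSemiring
    {S : Type u} {T : Type u} [Semiring S] [Semiring T]
    (f : S →+* T) (hf : Function.Surjective f)
    (hS : IsLeftCPSemiring S) : IsLeftCPSemiring T := by
  intro M _ _ ⟨m, hm⟩
  let : Module S M := Module.compHom M f
  have hsmul : ∀ (s : S) (x : M), f s • x = s • x := fun _ _ => rfl
  have := hS M ⟨m, Submodule.span_singleton_eq_top_of_surjective_ringHom hf hsmul hm⟩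
  exact Module.Projective.of_surjective_ringHom hf hsmul
end

section
/- For semirings S₁ and S₂, the product semiring S₁ × S₂ is a left CP-semiring if and only if both S₁ and S₂ are left CP-semirings. -/
/-! A module `M` over `S₁ × S₂` is the direct sum of `(1, 0) • M` and `(0, 1) • M`, on which
`S₁ × S₂` acts through the projections onto `S₁` and `S₂`; a cyclic `M` thus splits into a cyclic
`S₁`-module and a cyclic `S₂`-module. Projectivity over `Sᵢ` lifts to `S₁ × S₂` because the
projection `S₁ × S₂ → Sᵢ` has the `S₁ × S₂`-linear section `inl` (resp. `inr`); conversely,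
projectivity descends along any surjective ring homomorphism, so `S₁ × S₂` being CP forces each
factor to be CP. -/

universe u

open Function Finsupp

section RingHom

variable {R T M : Type*} [Semiring R] [Semiring T] [AddCommMonoid M] [Module R M] [Module T M]
  (f : R →+* T)

theorem Submodule.span_singleton_eq_top_iff_of_surjective (hf : Surjective f)
    (hsmul : ∀ r (x : M), f r • x = r • x) (m : M) :
    span R {m} = ⊤ ↔ span T {m} = ⊤ := by
  simp_rw [span_singleton_eq_top_iff, hf.exists, hsmul]

theorem Module.Projective.of_ringHom_surjective (hf : Surjective f)
    (hsmul : ∀ r (x : M), f r • x = r • x) [Module.Projective R M] : Module.Projective T M := by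
  obtain ⟨s, hs⟩ := ‹Module.Projective R M›
  refine ⟨⟨{ toFun x := (s x).mapRange f f.map_zero
             map_add' x y := by ext; simp
             map_smul' := hf.forall.2 fun r x ↦ by ext; simp [hsmul] }, fun x ↦ ?_⟩⟩
  simpa [linearCombination_apply, sum_mapRange_index, hsmul] using hs x

theorem Module.Projective.of_ringHom_rightInverse (σ : T →+ R) (hσ : RightInverse σ f)
    (hσ_mul : ∀ r t, σ (f r * t) = r * σ t) (hsmul : ∀ r (x : M), f r • x = r • x)
    [Module.Projective T M] : Module.Projective R M := by
  obtain ⟨s, hs⟩ := ‹Module.Projective T M›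
  refine ⟨⟨{ toFun x := (s x).mapRange σ σ.map_zero
             map_add' x y := by ext; simp
             map_smul' r x := by ext; simp [← hsmul, hσ_mul] }, fun x ↦ ?_⟩⟩
  simpa [linearCombination_apply, sum_mapRange_index, ← hsmul, hσ _] using hs x

end RingHom

theorem IsLeftCPSemiring.of_surjective {R T : Type u} [Semiring R] [Semiring T]
    (hR : IsLeftCPSemiring R) (f : R →+* T) (hf : Surjective f) : IsLeftCPSemiring T := by
  intro M _ _ ⟨m, hm⟩
  let := Module.compHom M f
  have hsmul : ∀ r (x : M), f r • x = r • x := fun _ _ ↦ rfl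
  have := hR M ⟨m, (Submodule.span_singleton_eq_top_iff_of_surjective f hf hsmul m).2 hm⟩
  exact .of_ringHom_surjective f hf hsmul

theorem IsLeftCPSemiring.projective_of_ringHom_rightInverse {S T N : Type u} [Semiring S]
    [Semiring T] [AddCommMonoid N] [Module S N] (hT : IsLeftCPSemiring T) (f : S →+* T)
    (σ : T →+ S) (hσ : RightInverse σ f) (hσ_mul : ∀ c t, σ (f c * t) = c * σ t)
    (hN : ∀ c c', f c = f c' → ∀ x : N, c • x = c' • x)
    (hcyc : ∃ m : N, Submodule.span S {m} = ⊤) : Module.Projective S N := by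
  obtain ⟨m, hm⟩ := hcyc
  let : SMul T N := ⟨fun t x ↦ σ t • x⟩
  have hsmul : ∀ c (x : N), f c • x = c • x := fun c ↦ hN _ _ (hσ (f c))
  let := hσ.surjective.moduleLeft f hsmul
  have := hT N
    ⟨m, (Submodule.span_singleton_eq_top_iff_of_surjective f hσ.surjective hsmul m).1 hm⟩
  exact .of_ringHom_rightInverse f σ hσ hσ_mul hsmul

theorem Submodule.span_singleton_rangeRestrict_eq_top {S M N : Type*} [Semiring S]
    [AddCommMonoid M] [Module S M] [AddCommMonoid N] [Module S N] {m : M}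
    (hm : span S {m} = ⊤) (g : M →ₗ[S] N) : span S {g.rangeRestrict m} = ⊤ := by
  rw [← Set.image_singleton, ← map_span, hm, map_top, LinearMap.range_rangeRestrict]

section Central

open Module.End LinearMap

variable {S M : Type*} [Semiring S] [AddCommMonoid M] [Module S M] {e : S}
  (he : e ∈ Set.center S)

theorem Module.End.smul_range_smulLeft_eq_of_mul_eq {c c' : S} (h : c * e = c' * e)
    (y : range (smulLeft e he : Module.End S M)) : c • y = c' • y := by
  obtain ⟨_, x, rfl⟩ := y
  ext
  simp [smul_smul, h]

theorem Module.Projective.of_range_smulLeft {e' : S} (he' : e' ∈ Set.center S) (h : e + e' = 1)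
    [Module.Projective S (range (smulLeft e he : Module.End S M))]
    [Module.Projective S (range (smulLeft e' he' : Module.End S M))] : Module.Projective S M :=
  .of_split ((smulLeft e he).rangeRestrict.prod (smulLeft e' he').rangeRestrict)
    ((range _).subtype.coprod (range _).subtype) (by ext x; simp [← add_smul, h])

end Central

open Module.End LinearMap in
theorem IsLeftCPSemiring.prod {S₁ S₂ : Type u} [Semiring S₁] [Semiring S₂]
    (h₁ : IsLeftCPSemiring S₁) (h₂ : IsLeftCPSemiring S₂) : IsLeftCPSemiring (S₁ × S₂) := by
  intro M _ _ ⟨m, hm⟩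
  have he₁ : ((1, 0) : S₁ × S₂) ∈ Set.center (S₁ × S₂) := by
    rw [Set.center_prod]; exact ⟨Set.one_mem_center, Set.zero_mem_center⟩
  have he₂ : ((0, 1) : S₁ × S₂) ∈ Set.center (S₁ × S₂) := by
    rw [Set.center_prod]; exact ⟨Set.zero_mem_center, Set.one_mem_center⟩
  have : Module.Projective (S₁ × S₂) (range (smulLeft _ he₁ : Module.End _ M)) :=
    h₁.projective_of_ringHom_rightInverse (RingHom.fst S₁ S₂) (AddMonoidHom.inl S₁ S₂)
      (fun _ ↦ rfl) (fun _ _ ↦ by ext <;> simp)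
      (fun c c' (h : c.1 = c'.1) ↦ smul_range_smulLeft_eq_of_mul_eq he₁ (by ext <;> simp [h]))
      ⟨_, Submodule.span_singleton_rangeRestrict_eq_top hm _⟩
  have : Module.Projective (S₁ × S₂) (range (smulLeft _ he₂ : Module.End _ M)) :=
    h₂.projective_of_ringHom_rightInverse (RingHom.snd S₁ S₂) (AddMonoidHom.inr S₁ S₂)
      (fun _ ↦ rfl) (fun _ _ ↦ by ext <;> simp)
      (fun c c' (h : c.2 = c'.2) ↦ smul_range_smulLeft_eq_of_mul_eq he₂ (by ext <;> simp [h]))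
      ⟨_, Submodule.span_singleton_rangeRestrict_eq_top hm _⟩
  exact .of_range_smulLeft he₁ he₂ (by ext <;> simp)

/-- a product semiring `S₁ × S₂` is a left CP-semiring iff both
`S₁` and `S₂` are left CP-semirings. -/
theorem prod_isLeftCPSemiring_iff
    (S₁ : Type u) (S₂ : Type u) [Semiring S₁] [Semiring S₂] :
    IsLeftCPSemiring (S₁ × S₂) ↔ IsLeftCPSemiring S₁ ∧ IsLeftCPSemiring S₂ :=
  ⟨fun h ↦ ⟨h.of_surjective (RingHom.fst S₁ S₂) Prod.fst_surjective,
      h.of_surjective (RingHom.snd S₁ S₂) Prod.snd_surjective⟩,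
    fun ⟨h₁, h₂⟩ ↦ h₁.prod h₂⟩
end

section
/- Let S be a left CP-semiring, M a left S-semimodule, and p : S →ₗ[S] M a surjective S-linear map from the regular left semimodule (so M is a quotient of S by a semimodule congruence). Then there exist an element e ∈ S with e * e = e and an S-linear map ψ : M →ₗ[S] S such that p ∘ ψ = id_M, ψ(p(1)) = e, p(e) = p(1), and the range of ψ equals Submodule.span S {e} (i.e., the cyclic left ideal Se); in particular M is isomorphic as an S-semimodule to Se. -/
/-! A surjection `p : S → M` is a surjection onto the cyclic module generated by `p 1`, so over a
CP-semiring it has a section `ψ`. Then `ψ ∘ p` is an idempotent endomorphism of the regular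
module; like every such endomorphism it is right multiplication by its value `e = ψ (p 1)` at `1`,
so `e` is idempotent and `range ψ = range (ψ ∘ p) = Se`. -/

universe u

namespace LinearMap

variable {R M N : Type*} [Semiring R] [AddCommMonoid M] [Module R M] [AddCommMonoid N] [Module R N]

theorem eq_toSpanSingleton_map_one (f : R →ₗ[R] M) : f = toSpanSingleton R M (f 1) :=
  ext_ring (toSpanSingleton_apply_one R M (f 1)).symm

theorem span_singleton_map_one_eq_top {f : R →ₗ[R] M} (hf : Function.Surjective f) :
    Submodule.span R {f 1} = ⊤ := by
  rw [← range_toSpanSingleton, ← eq_toSpanSingleton_map_one, range_eq_top.mpr hf]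

theorem isIdempotentElem_comp_of_comp_eq_id {p : M →ₗ[R] N} {ψ : N →ₗ[R] M} (h : p ∘ₗ ψ = id) :
    IsIdempotentElem (ψ ∘ₗ p) :=
  calc (ψ ∘ₗ p) ∘ₗ (ψ ∘ₗ p) = ψ ∘ₗ (p ∘ₗ ψ) ∘ₗ p := rfl
    _ = ψ ∘ₗ p := by rw [h, id_comp]

end LinearMap

theorem IsLeftCPSemiring.exists_comp_eq_id {S : Type u} [Semiring S] (hS : IsLeftCPSemiring S)
    {M : Type u} [AddCommMonoid M] [Module S M] {p : S →ₗ[S] M} (hp : Function.Surjective p) :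
    ∃ ψ : M →ₗ[S] S, p ∘ₗ ψ = LinearMap.id :=
  have := hS M ⟨p 1, LinearMap.span_singleton_map_one_eq_top hp⟩
  Module.projective_lifting_property p LinearMap.id hp

/-- over a left CP-semiring, every quotient `M` of the regular left
semimodule splits off via an idempotent `e`: there are `e` with `e * e = e` and a
section `ψ` of `p` with `ψ (p 1) = e`, `p e = p 1`, and `range ψ = Se`. -/
theorem quotient_of_regular_splits
    {S : Type u} [Semiring S] (hS : IsLeftCPSemiring S)
    (M : Type u) [AddCommMonoid M] [Module S M]
    (p : S →ₗ[S] M) (hp : Function.Surjective p) :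
    ∃ (e : S) (ψ : M →ₗ[S] S), e * e = e ∧
      p ∘ₗ ψ = LinearMap.id ∧
      ψ (p 1) = e ∧
      p e = p 1 ∧
      LinearMap.range ψ = Submodule.span S {e} := by
  obtain ⟨ψ, hψ⟩ := hS.exists_comp_eq_id hp
  have hψp : ψ ∘ₗ p = LinearMap.toSpanSingleton S S (ψ (p 1)) :=
    LinearMap.eq_toSpanSingleton_map_one _
  refine ⟨ψ (p 1), ψ, ?_, hψ, rfl, congr($hψ (p 1)), ?_⟩
  · exact LinearMap.toSpanSingleton_isIdempotentElem_iff.mp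
      (hψp ▸ LinearMap.isIdempotentElem_comp_of_comp_eq_id hψ)
  · rw [← LinearMap.range_comp_of_range_eq_top ψ (LinearMap.range_eq_top.mpr hp), hψp,
      LinearMap.range_toSpanSingleton]
end

section
/- Let S be a left CP-semiring and I a left ideal of S (I : Ideal S, i.e., an S-submodule of S). Then there exists an element e ∈ S with e * e = e such that 1 is Bourne-congruent to e modulo I (i.e., there exist x, y ∈ I with 1 + x = e + y) and a * e = 0 for every a ∈ I. -/
universe u

namespace ModuleCon

variable {R M : Type*} [Semiring R] [AddCommMonoid M] [Module R M] (c : ModuleCon R M)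

def mkₗ : M →ₗ[R] c.Quotient where
  toFun := Quotient.mk''
  map_add' _ _ := rfl
  map_smul' _ _ := rfl

theorem mkₗ_surjective : Function.Surjective c.mkₗ := Quotient.mk''_surjective

theorem mkₗ_eq_iff {a b : M} : c.mkₗ a = c.mkₗ b ↔ c.toSetoid a b := Quotient.eq

theorem span_singleton_mkₗ_one (c : ModuleCon R R) : Submodule.span R {c.mkₗ 1} = ⊤ := by
  refine Submodule.eq_top_iff'.2 fun m ↦ ?_
  obtain ⟨a, rfl⟩ := c.mkₗ_surjective m
  exact Submodule.mem_span_singleton.2 ⟨a, by rw [← map_smul, smul_eq_mul, mul_one]⟩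

/-- A splitting `h` of `R → R/c` is right multiplication by `e = h [1]`, which forces `e` to be
idempotent, congruent to `1`, and annihilated by everything congruent to `0`. -/
theorem exists_idempotent_of_projective (c : ModuleCon R R) [Module.Projective R c.Quotient] :
    ∃ e : R, e * e = e ∧ c.mkₗ e = c.mkₗ 1 ∧ ∀ a, c.mkₗ a = 0 → a * e = 0 := by
  obtain ⟨h, hh⟩ := Module.projective_lifting_property c.mkₗ LinearMap.id c.mkₗ_surjective
  have hsplit : ∀ m, c.mkₗ (h m) = m := LinearMap.congr_fun hh
  have hmul : ∀ a : R, h (c.mkₗ a) = a * h (c.mkₗ 1) := fun a ↦ by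
    rw [← smul_eq_mul, ← map_smul, ← map_smul, smul_eq_mul, mul_one]
  refine ⟨h (c.mkₗ 1), ?_, hsplit _, fun a ha ↦ ?_⟩
  · rw [← hmul, hsplit]
  · rw [← hmul, ha, map_zero]

end ModuleCon

namespace Submodule

variable {R M : Type*} [Semiring R] [AddCommMonoid M] [Module R M] (p : Submodule R M)

def bourneCon : ModuleCon R M where
  r a b := ∃ x ∈ p, ∃ y ∈ p, a + x = b + y
  iseqv.refl _ := ⟨0, p.zero_mem, 0, p.zero_mem, rfl⟩
  iseqv.symm := fun ⟨x, hx, y, hy, h⟩ ↦ ⟨y, hy, x, hx, h.symm⟩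
  iseqv.trans := fun {a b c} ⟨x, hx, y, hy, h⟩ ⟨u, hu, v, hv, h'⟩ ↦
    ⟨x + u, p.add_mem hx hu, v + y, p.add_mem hv hy, calc
      a + (x + u) = b + u + y := by rw [← add_assoc, h, add_right_comm]
      _ = c + (v + y) := by rw [h', add_assoc]⟩
  add' := fun ⟨x, hx, y, hy, h⟩ ⟨u, hu, v, hv, h'⟩ ↦
    ⟨x + u, p.add_mem hx hu, y + v, p.add_mem hy hv, by
      rw [add_add_add_comm, h, h', add_add_add_comm]⟩
  smul s _ _ := fun ⟨x, hx, y, hy, h⟩ ↦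
    ⟨s • x, p.smul_mem s hx, s • y, p.smul_mem s hy, by rw [← smul_add, ← smul_add, h]⟩

theorem bourneCon_mkₗ_eq_iff {a b : M} :
    p.bourneCon.mkₗ a = p.bourneCon.mkₗ b ↔ ∃ x ∈ p, ∃ y ∈ p, a + x = b + y :=
  p.bourneCon.mkₗ_eq_iff

theorem bourneCon_mkₗ_eq_zero {a : M} (ha : a ∈ p) : p.bourneCon.mkₗ a = 0 :=
  (p.bourneCon_mkₗ_eq_iff (b := 0)).2 ⟨0, p.zero_mem, a, ha, by rw [add_zero, zero_add]⟩

end Submodule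

/-- for any left ideal `I` of a left CP-semiring `S`, there is an
idempotent `e` which is Bourne-congruent to `1` modulo `I` and with `a * e = 0`
for every `a ∈ I`. -/
theorem exists_idempotent_bourne_congruent_one
    {S : Type u} [Semiring S] (hS : IsLeftCPSemiring S) (I : Ideal S) :
    ∃ e : S, e * e = e ∧ (∃ x ∈ I, ∃ y ∈ I, 1 + x = e + y) ∧
      ∀ a ∈ I, a * e = 0 := by
  have : Module.Projective S I.bourneCon.Quotient :=
    hS _ ⟨_, I.bourneCon.span_singleton_mkₗ_one⟩
  obtain ⟨e, he, he_one, he_ann⟩ := I.bourneCon.exists_idempotent_of_projective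
  exact ⟨e, he, I.bourneCon_mkₗ_eq_iff.1 he_one.symm,
    fun a ha ↦ he_ann a (I.bourneCon_mkₗ_eq_zero ha)⟩
end

section
/- Let S be a semiring that is not a ring, i.e., there exists a ∈ S having no additive inverse (∀ b, a + b ≠ 0). Then for every n ≥ 3, the matrix semiring Matrix (Fin n) (Fin n) S is not a left CP-semiring. -/
universe u

namespace CPAux

variable {S : Type u} [Semiring S]

/-- The "zeroid": elements having an additive inverse. -/
def Zd (S : Type u) [Semiring S] : Set S := {s | ∃ t, s + t = 0}

lemma zd_zero : (0 : S) ∈ Zd S := ⟨0, add_zero 0⟩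

lemma zd_add {s t : S} (hs : s ∈ Zd S) (ht : t ∈ Zd S) : s + t ∈ Zd S := by
  obtain ⟨s', hs'⟩ := hs
  obtain ⟨t', ht'⟩ := ht
  exact ⟨s' + t', by rw [add_add_add_comm, hs', ht', add_zero]⟩

lemma zd_of_add {s t : S} (h : s + t ∈ Zd S) : s ∈ Zd S := by
  obtain ⟨w, hw⟩ := h
  exact ⟨t + w, by rw [← add_assoc, hw]⟩

open Classical in
noncomputable def theta (s : S) : Bool := if s ∈ Zd S then false else true

lemma theta_zero : theta (0 : S) = false := by
  simp [theta, zd_zero]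

lemma theta_true {s : S} : theta s = true ↔ s ∉ Zd S := by
  by_cases h : s ∈ Zd S <;> simp [theta, h]

lemma theta_false {s : S} : theta s = false ↔ s ∈ Zd S := by
  by_cases h : s ∈ Zd S <;> simp [theta, h]

lemma theta_add (s t : S) : theta (s + t) = (theta s || theta t) := by
  by_cases hs : s ∈ Zd S
  · by_cases ht : t ∈ Zd S
    · have : s + t ∈ Zd S := zd_add hs ht
      simp [theta, hs, ht, this]
    · have : s + t ∉ Zd S := fun h => ht (zd_of_add (by rwa [add_comm] at h))
      simp [theta, hs, ht, this]
  · have : s + t ∉ Zd S := fun h => hs (zd_of_add h)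
    simp [theta, hs, this]

/-- Saturation: if at least two of the three components are true, all become true. -/
def sat (b : Fin 3 → Bool) : Fin 3 → Bool :=
  if (b 0 && b 1 || b 0 && b 2 || b 1 && b 2) then ![true, true, true] else b

lemma sat_or : ∀ b b' : Fin 3 → Bool,
    sat (fun i => b i || b' i) = sat (fun i => sat b i || sat b' i) := by decide

lemma sat_x : ∀ b : Fin 3 → Bool, sat b = ![true, false, false] → b 0 = true := by decide

lemma sat_y : ∀ b : Fin 3 → Bool, sat b = ![false, true, false] → b 0 = false := by decide

lemma sat_z : ∀ b : Fin 3 → Bool, sat b = ![false, false, true] → b 0 = false := by decide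


variable {S : Type u} [Semiring S]

def baseRel (S : Type u) [Semiring S] : (Fin 3 → S) → (Fin 3 → S) → Prop := fun v w =>
  ∃ s : S, (v = ![s, s, 0] ∧ w = ![s, 0, s]) ∨ (v = ![s, 0, s] ∧ w = ![0, s, s])

def NCon (S : Type u) [Semiring S] : AddCon (Fin 3 → S) := addConGen (baseRel S)

abbrev NN (S : Type u) [Semiring S] : Type u := (NCon S).Quotient

lemma smul_vec3 (s a b c : S) : s • (![a, b, c] : Fin 3 → S) = ![s * a, s * b, s * c] := by
  funext i
  fin_cases i <;> simp

lemma rel_smul (s : S) {v w : Fin 3 → S} (h : NCon S v w) : NCon S (s • v) (s • w) := by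
  have h' : AddConGen.Rel (baseRel S) v w := h
  clear h
  show AddConGen.Rel (baseRel S) (s • v) (s • w)
  induction h' with
  | of x y hxy =>
    refine AddConGen.Rel.of _ _ ?_
    obtain ⟨t, ⟨hv, hw⟩ | ⟨hv, hw⟩⟩ := hxy
    · exact ⟨s * t, Or.inl ⟨by rw [hv, smul_vec3, mul_zero], by rw [hw, smul_vec3, mul_zero]⟩⟩
    · exact ⟨s * t, Or.inr ⟨by rw [hv, smul_vec3, mul_zero], by rw [hw, smul_vec3, mul_zero]⟩⟩
  | refl x => exact AddConGen.Rel.refl _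
  | symm _ ih => exact AddConGen.Rel.symm ih
  | trans _ _ ih1 ih2 => exact AddConGen.Rel.trans ih1 ih2
  | add _ _ ih1 ih2 => rw [smul_add, smul_add]; exact AddConGen.Rel.add ih1 ih2

noncomputable instance : SMul S (NN S) :=
  ⟨fun s x => Quotient.map' (fun v => s • v) (fun _ _ h => rel_smul s h) x⟩

lemma smul_mk (s : S) (v : Fin 3 → S) : s • ((v : NN S)) = ((s • v : Fin 3 → S) : NN S) := rfl

noncomputable instance : Module S (NN S) where
  one_smul x := AddCon.induction_on x fun v => by rw [smul_mk, one_smul]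
  mul_smul s t x := AddCon.induction_on x fun v => by rw [smul_mk, smul_mk, smul_mk, mul_smul]
  smul_zero s := by rw [← AddCon.coe_zero, smul_mk, smul_zero]
  smul_add s x y := AddCon.induction_on₂ x y fun v w => by
    rw [← AddCon.coe_add, smul_mk, smul_mk, smul_mk, smul_add, AddCon.coe_add]
  add_smul s t x := AddCon.induction_on x fun v => by
    rw [smul_mk, smul_mk, smul_mk, add_smul, AddCon.coe_add]
  zero_smul x := AddCon.induction_on x fun v => by rw [smul_mk, zero_smul, AddCon.coe_zero]

noncomputable def xN : NN S := ((![1, 0, 0] : Fin 3 → S) : NN S)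
noncomputable def yN : NN S := ((![0, 1, 0] : Fin 3 → S) : NN S)
noncomputable def zN : NN S := ((![0, 0, 1] : Fin 3 → S) : NN S)

lemma vec_add_xy : (![1,0,0] : Fin 3 → S) + ![0,1,0] = ![1,1,0] := by
  funext i; fin_cases i <;> simp

lemma vec_add_xz : (![1,0,0] : Fin 3 → S) + ![0,0,1] = ![1,0,1] := by
  funext i; fin_cases i <;> simp

lemma vec_add_yz : (![0,1,0] : Fin 3 → S) + ![0,0,1] = ![0,1,1] := by
  funext i; fin_cases i <;> simp

lemma rel12 : (xN : NN S) + yN = xN + zN := by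
  show ((![1,0,0] : Fin 3 → S) : NN S) + (![0,1,0] : Fin 3 → S) =
    ((![1,0,0] : Fin 3 → S) : NN S) + (![0,0,1] : Fin 3 → S)
  rw [← AddCon.coe_add, ← AddCon.coe_add, vec_add_xy, vec_add_xz]
  exact (AddCon.eq _).2 (AddConGen.Rel.of _ _ ⟨1, Or.inl ⟨rfl, rfl⟩⟩)

lemma rel23 : (xN : NN S) + zN = yN + zN := by
  show ((![1,0,0] : Fin 3 → S) : NN S) + (![0,0,1] : Fin 3 → S) =
    ((![0,1,0] : Fin 3 → S) : NN S) + (![0,0,1] : Fin 3 → S)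
  rw [← AddCon.coe_add, ← AddCon.coe_add, vec_add_xz, vec_add_yz]
  exact (AddCon.eq _).2 (AddConGen.Rel.of _ _ ⟨1, Or.inr ⟨rfl, rfl⟩⟩)

lemma mk_eq (v : Fin 3 → S) :
    ((v : NN S)) = v 0 • xN + v 1 • yN + v 2 • zN := by
  show _ = v 0 • ((![1,0,0] : Fin 3 → S) : NN S) + v 1 • ((![0,1,0] : Fin 3 → S) : NN S)
      + v 2 • ((![0,0,1] : Fin 3 → S) : NN S)
  rw [smul_mk, smul_mk, smul_mk, ← AddCon.coe_add, ← AddCon.coe_add]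
  congr 1
  funext i
  fin_cases i <;> simp [smul_vec3]


noncomputable def phi (v : Fin 3 → S) : Fin 3 → Bool := sat fun i => theta (v i)

lemma phi_add (v w : Fin 3 → S) : phi (v + w) = sat (fun i => phi v i || phi w i) := by
  unfold phi
  rw [← sat_or]
  have h : (fun i => theta ((v + w) i)) = fun i => theta (v i) || theta (w i) :=
    funext fun i => by rw [Pi.add_apply, theta_add]
  rw [h]

lemma theta_comp_vec (a b c : S) :
    (fun i => theta ((![a, b, c] : Fin 3 → S) i)) = ![theta a, theta b, theta c] := by
  funext i
  fin_cases i <;> simp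

lemma phi_base {v w : Fin 3 → S} (h : baseRel S v w) : phi v = phi w := by
  obtain ⟨t, ⟨hv, hw⟩ | ⟨hv, hw⟩⟩ := h <;> subst hv <;> subst hw <;>
    · unfold phi
      rw [theta_comp_vec, theta_comp_vec, theta_zero]
      cases theta t <;> decide

lemma phi_of_rel {v w : Fin 3 → S} (h : NCon S v w) : phi v = phi w := by
  have h' : AddConGen.Rel (baseRel S) v w := h
  clear h
  induction h' with
  | of x y hxy => exact phi_base hxy
  | refl x => rfl
  | symm _ ih => exact ih.symm
  | trans _ _ ih1 ih2 => exact ih1.trans ih2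
  | add _ _ ih1 ih2 => rw [phi_add, phi_add, ih1, ih2]

lemma phi_xvec (h1 : (1 : S) ∉ Zd S) : phi (![1, 0, 0] : Fin 3 → S) = ![true, false, false] := by
  unfold phi
  rw [theta_comp_vec, theta_zero, theta_true.2 h1]
  decide

lemma phi_yvec (h1 : (1 : S) ∉ Zd S) : phi (![0, 1, 0] : Fin 3 → S) = ![false, true, false] := by
  unfold phi
  rw [theta_comp_vec, theta_zero, theta_true.2 h1]
  decide

lemma phi_zvec (h1 : (1 : S) ∉ Zd S) : phi (![0, 0, 1] : Fin 3 → S) = ![false, false, true] := by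
  unfold phi
  rw [theta_comp_vec, theta_zero, theta_true.2 h1]
  decide

lemma comp0_x (h1 : (1 : S) ∉ Zd S) {v : Fin 3 → S} (h : (v : NN S) = xN) : v 0 ∉ Zd S := by
  have hr : NCon S v ![1, 0, 0] := (AddCon.eq _).1 h
  have hp := (phi_of_rel hr).trans (phi_xvec h1)
  exact theta_true.1 (sat_x _ hp)

lemma comp0_y (h1 : (1 : S) ∉ Zd S) {v : Fin 3 → S} (h : (v : NN S) = yN) : v 0 ∈ Zd S := by
  have hr : NCon S v ![0, 1, 0] := (AddCon.eq _).1 h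
  have hp := (phi_of_rel hr).trans (phi_yvec h1)
  exact theta_false.1 (sat_y _ hp)

lemma comp0_z (h1 : (1 : S) ∉ Zd S) {v : Fin 3 → S} (h : (v : NN S) = zN) : v 0 ∈ Zd S := by
  have hr : NCon S v ![0, 0, 1] := (AddCon.eq _).1 h
  have hp := (phi_of_rel hr).trans (phi_zvec h1)
  exact theta_false.1 (sat_z _ hp)

lemma coe_sum {ι : Type*} (t : Finset ι) (r : ι → (Fin 3 → S)) :
    ((∑ i ∈ t, r i : Fin 3 → S) : NN S) = ∑ i ∈ t, ((r i : NN S)) :=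
  map_sum (AddCon.mk' (NCon S)) r t

/-- The core contradiction. -/
lemma core {ι : Type*} (t : Finset ι) (α β γ : ι → S) (v : ι → NN S)
    (h1 : (1 : S) ∉ Zd S)
    (hrel : ∀ i ∈ t, α i + β i = β i + γ i)
    (hx : (∑ i ∈ t, α i • v i) = xN)
    (hy : (∑ i ∈ t, β i • v i) = yN)
    (hz : (∑ i ∈ t, γ i • v i) = zN) : False := by
  obtain ⟨r, hr⟩ : ∃ r : ι → (Fin 3 → S), ∀ i, ((r i : NN S)) = v i :=
    ⟨fun i => (v i).out, fun i => Quotient.out_eq _⟩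
  have key : ∀ δ : ι → S, ((∑ i ∈ t, δ i • r i : Fin 3 → S) : NN S) = ∑ i ∈ t, δ i • v i := by
    intro δ
    rw [coe_sum]
    exact Finset.sum_congr rfl fun i _ => by rw [← hr i, smul_mk]
  have hx' : ((∑ i ∈ t, α i • r i : Fin 3 → S) : NN S) = xN := (key α).trans hx
  have hy' : ((∑ i ∈ t, β i • r i : Fin 3 → S) : NN S) = yN := (key β).trans hy
  have hz' : ((∑ i ∈ t, γ i • r i : Fin 3 → S) : NN S) = zN := (key γ).trans hz
  have e0 : ∀ δ : ι → S, (∑ i ∈ t, δ i • r i) 0 = ∑ i ∈ t, δ i * r i 0 := by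
    intro δ
    rw [Finset.sum_apply]
    rfl
  have hA : (∑ i ∈ t, α i * r i 0) ∉ Zd S := by rw [← e0]; exact comp0_x h1 hx'
  have hB : (∑ i ∈ t, β i * r i 0) ∈ Zd S := by rw [← e0]; exact comp0_y h1 hy'
  have hC : (∑ i ∈ t, γ i * r i 0) ∈ Zd S := by rw [← e0]; exact comp0_z h1 hz'
  have hsum : (∑ i ∈ t, α i * r i 0) + (∑ i ∈ t, β i * r i 0) =
      (∑ i ∈ t, β i * r i 0) + (∑ i ∈ t, γ i * r i 0) := by
    rw [← Finset.sum_add_distrib, ← Finset.sum_add_distrib]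
    exact Finset.sum_congr rfl fun i hi => by rw [← add_mul, ← add_mul, hrel i hi]
  exact hA (zd_of_add (hsum ▸ zd_add hB hC))

section NNLemmas

lemma nnsmul_zero (s : S) : s • (0 : NN S) = 0 := by
  rw [← AddCon.coe_zero, smul_mk, smul_zero]

lemma nnzero_smul (v : NN S) : (0 : S) • v = 0 :=
  AddCon.induction_on v fun w => by rw [smul_mk, zero_smul, AddCon.coe_zero]

lemma nnone_smul (v : NN S) : (1 : S) • v = v :=
  AddCon.induction_on v fun w => by rw [smul_mk, one_smul]

lemma nnmul_smul (s t : S) (v : NN S) : (s * t) • v = s • (t • v) :=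
  AddCon.induction_on v fun w => by rw [smul_mk, smul_mk, smul_mk, mul_smul]

lemma nnsmul_add (s : S) (v w : NN S) : s • (v + w) = s • v + s • w :=
  AddCon.induction_on₂ v w fun v' w' => by
    rw [← AddCon.coe_add, smul_mk, smul_add, AddCon.coe_add, smul_mk, smul_mk]

lemma nnadd_smul (s t : S) (v : NN S) : (s + t) • v = s • v + t • v :=
  AddCon.induction_on v fun w => by
    rw [smul_mk, add_smul, AddCon.coe_add, smul_mk, smul_mk]

lemma nnsum_smul {ι : Type*} (t : Finset ι) (c : ι → S) (v : NN S) :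
    (∑ i ∈ t, c i) • v = ∑ i ∈ t, c i • v :=
  AddCon.induction_on v fun w => by
    rw [smul_mk, Finset.sum_smul, coe_sum]
    exact Finset.sum_congr rfl fun i _ => rfl

lemma nnsmul_sum {ι : Type*} (s : S) (t : Finset ι) (f : ι → NN S) :
    s • (∑ i ∈ t, f i) = ∑ i ∈ t, s • f i := by
  classical
  induction t using Finset.induction_on with
  | empty => rw [Finset.sum_empty, Finset.sum_empty, nnsmul_zero]
  | @insert x s hx ih =>
    rw [Finset.sum_insert hx, Finset.sum_insert hx, nnsmul_add, ih]

end NNLemmas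

section MatrixModule

variable (n : ℕ)

noncomputable instance matSMul : SMul (Matrix (Fin n) (Fin n) S) (Fin n → NN S) :=
  ⟨fun A v i => ∑ j, A i j • v j⟩

lemma matSMul_apply (A : Matrix (Fin n) (Fin n) S) (v : Fin n → NN S) (i : Fin n) :
    (A • v) i = ∑ j, A i j • v j := rfl

noncomputable instance matModule : Module (Matrix (Fin n) (Fin n) S) (Fin n → NN S) where
  one_smul v := funext fun i => by
    show ∑ j, (1 : Matrix (Fin n) (Fin n) S) i j • v j = v i
    have h : ∀ j ∈ Finset.univ, (1 : Matrix (Fin n) (Fin n) S) i j • v j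
        = if i = j then v j else 0 := by
      intro j _
      rw [Matrix.one_apply]
      by_cases hij : i = j
      · rw [if_pos hij, if_pos hij, nnone_smul]
      · rw [if_neg hij, if_neg hij, nnzero_smul]
    rw [Finset.sum_congr rfl h, Finset.sum_ite_eq, if_pos (Finset.mem_univ i)]
  mul_smul A B v := funext fun i => by
    show ∑ j, (A * B) i j • v j = ∑ k, A i k • (∑ j, B k j • v j)
    have h : ∀ j ∈ Finset.univ, (A * B) i j • v j = ∑ k, A i k • (B k j • v j) := by
      intro j _
      rw [Matrix.mul_apply, nnsum_smul]
      exact Finset.sum_congr rfl fun k _ => nnmul_smul _ _ _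
    rw [Finset.sum_congr rfl h, Finset.sum_comm]
    exact Finset.sum_congr rfl fun k _ => (nnsmul_sum _ _ _).symm
  smul_zero A := funext fun i => by
    show ∑ j, A i j • (0 : NN S) = 0
    rw [Finset.sum_congr rfl fun j _ => nnsmul_zero (A i j), Finset.sum_const_zero]
  smul_add A v w := funext fun i => by
    show ∑ j, A i j • (v j + w j) = (∑ j, A i j • v j) + ∑ j, A i j • w j
    rw [Finset.sum_congr rfl fun j _ => nnsmul_add (A i j) (v j) (w j),
      Finset.sum_add_distrib]
  add_smul A B v := funext fun i => by
    show ∑ j, (A + B) i j • v j = (∑ j, A i j • v j) + ∑ j, B i j • v j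
    have h : ∀ j ∈ Finset.univ, (A + B) i j • v j = A i j • v j + B i j • v j := by
      intro j _
      rw [Matrix.add_apply, nnadd_smul]
    rw [Finset.sum_congr rfl h, Finset.sum_add_distrib]
  zero_smul v := funext fun i => by
    show ∑ j, (0 : Matrix (Fin n) (Fin n) S) i j • v j = 0
    have h : ∀ j ∈ Finset.univ, (0 : Matrix (Fin n) (Fin n) S) i j • v j = 0 := by
      intro j _
      rw [Matrix.zero_apply, nnzero_smul]
    rw [Finset.sum_congr rfl h, Finset.sum_const_zero]

end MatrixModule

end CPAux

open CPAux in
/-- if a semiring `S` is not a ring (some element has no additive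
inverse), then no matrix semiring `Mₙ(S)` with `n ≥ 3` is a left CP-semiring. -/
theorem matrix_not_isLeftCPSemiring_of_not_ring
    {S : Type u} [Semiring S] (a : S) (ha : ∀ b : S, a + b ≠ 0)
    (n : ℕ) (hn : 3 ≤ n) :
    ¬ IsLeftCPSemiring (Matrix (Fin n) (Fin n) S) := by
  classical
  intro hCP
  -- `1` has no additive inverse
  have h1 : (1 : S) ∉ Zd S := by
    rintro ⟨t, ht⟩
    refine ha (a * t) ?_
    calc a + a * t = a * (1 + t) := by rw [mul_add, mul_one]
    _ = 0 := by rw [ht, mul_zero]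
  -- distinguished indices
  let j0 : Fin n := ⟨0, by omega⟩
  let j1 : Fin n := ⟨1, by omega⟩
  let j2 : Fin n := ⟨2, by omega⟩
  have hj01 : j0 ≠ j1 := by simp [j0, j1, Fin.ext_iff]
  have hj02 : j0 ≠ j2 := by simp [j0, j2, Fin.ext_iff]
  have hj12 : j1 ≠ j2 := by simp [j1, j2, Fin.ext_iff]
  -- the cyclic generator
  set m₀ : Fin n → NN S := fun j =>
    if j = j0 then xN else if j = j1 then yN else if j = j2 then zN else 0 with hm₀
  have hspan : Submodule.span (Matrix (Fin n) (Fin n) S) {m₀} = ⊤ := by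
    refine top_unique fun w _ => ?_
    rw [Submodule.mem_span_singleton]
    refine ⟨(fun i j => if j = j0 then (w i).out 0 else if j = j1 then (w i).out 1
      else if j = j2 then (w i).out 2 else 0 : Matrix (Fin n) (Fin n) S), ?_⟩
    funext i
    show ∑ j, (if j = j0 then (w i).out 0 else if j = j1 then (w i).out 1
      else if j = j2 then (w i).out 2 else 0) • m₀ j = w i
    have hvan : ∀ j ∈ Finset.univ, j ∉ ({j0, j1, j2} : Finset (Fin n)) →
        (if j = j0 then (w i).out 0 else if j = j1 then (w i).out 1
          else if j = j2 then (w i).out 2 else 0) • m₀ j = 0 := by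
      intro j _ hj
      simp only [Finset.mem_insert, Finset.mem_singleton] at hj
      push_neg at hj
      rw [if_neg hj.1, if_neg hj.2.1, if_neg hj.2.2, nnzero_smul]
    rw [← Finset.sum_subset (Finset.subset_univ ({j0, j1, j2} : Finset (Fin n))) hvan]
    have hmem1 : j0 ∉ ({j1, j2} : Finset (Fin n)) := by
      simp [hj01, hj02]
    have hmem2 : j1 ∉ ({j2} : Finset (Fin n)) := by
      simp [hj12]
    rw [Finset.sum_insert hmem1, Finset.sum_insert hmem2, Finset.sum_singleton]
    rw [if_pos rfl, if_neg (Ne.symm hj01), if_pos rfl, if_neg (Ne.symm hj02),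
      if_neg (Ne.symm hj12), if_pos rfl]
    have hm0 : m₀ j0 = xN := by
      show (if j0 = j0 then xN else if j0 = j1 then yN else if j0 = j2 then zN else 0) = xN
      rw [if_pos rfl]
    have hm1 : m₀ j1 = yN := by
      show (if j1 = j0 then xN else if j1 = j1 then yN else if j1 = j2 then zN else 0) = yN
      rw [if_neg (Ne.symm hj01), if_pos rfl]
    have hm2 : m₀ j2 = zN := by
      show (if j2 = j0 then xN else if j2 = j1 then yN else if j2 = j2 then zN else 0) = zN
      rw [if_neg (Ne.symm hj02), if_neg (Ne.symm hj12), if_pos rfl]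
    rw [hm0, hm1, hm2, ← add_assoc, ← mk_eq ((w i).out)]
    exact Quotient.out_eq (w i)
  -- projectivity of the cyclic module
  have hproj : Module.Projective (Matrix (Fin n) (Fin n) S) (Fin n → NN S) :=
    hCP _ ⟨m₀, hspan⟩
  obtain ⟨σ, hσ⟩ := (Module.projective_def).1 hproj
  -- the three distinguished elements
  set X : Fin n → NN S := fun i => if i = j0 then xN else 0 with hX
  set Y : Fin n → NN S := fun i => if i = j0 then yN else 0 with hY
  set Z : Fin n → NN S := fun i => if i = j0 then zN else 0 with hZ
  have hXYZ : X + Y = Y + Z := by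
    funext i
    by_cases hi : i = j0
    · show X i + Y i = Y i + Z i
      rw [hX, hY, hZ]
      simp only [if_pos hi]
      exact rel12.trans rel23
    · show X i + Y i = Y i + Z i
      rw [hX, hY, hZ]
      simp only [if_neg hi]
  set f := σ X with hf
  set g := σ Y with hg
  set h := σ Z with hh
  have hfg : f + g = g + h := by rw [hf, hg, hh, ← map_add, ← map_add, hXYZ]
  set T : Finset (Fin n → NN S) := (f.support ∪ g.support) ∪ h.support with hT
  have htot : ∀ q : (Fin n → NN S) →₀ Matrix (Fin n) (Fin n) S, q.support ⊆ T →
      Finsupp.linearCombination (Matrix (Fin n) (Fin n) S) id q = ∑ m ∈ T, q m • m := by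
    intro q hq
    rw [Finsupp.linearCombination_apply]
    exact Finsupp.sum_of_support_subset q hq _ (fun m _ => zero_smul (Matrix (Fin n) (Fin n) S) (id m))
  have hXf : ∑ m ∈ T, f m • m = X := by
    rw [← htot f (by rw [hT]; exact (Finset.subset_union_left).trans Finset.subset_union_left)]
    exact hσ X
  have hYg : ∑ m ∈ T, g m • m = Y := by
    rw [← htot g (by rw [hT]; exact (Finset.subset_union_right).trans Finset.subset_union_left)]
    exact hσ Y
  have hZh : ∑ m ∈ T, h m • m = Z := by
    rw [← htot h (by rw [hT]; exact Finset.subset_union_right)]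
    exact hσ Z
  -- flatten and apply the core lemma
  refine core (ι := (Fin n → NN S) × Fin n) (T ×ˢ Finset.univ)
    (fun p => f p.1 j0 p.2) (fun p => g p.1 j0 p.2) (fun p => h p.1 j0 p.2)
    (fun p => p.1 p.2) h1 ?_ ?_ ?_ ?_
  · rintro ⟨m, j⟩ _
    have h2 : f m + g m = g m + h m := by
      rw [← Finsupp.add_apply, ← Finsupp.add_apply, hfg]
    exact congrFun (congrFun h2 j0) j
  · rw [Finset.sum_product]
    have hc : ∀ m ∈ T, (∑ j, f m j0 j • m j) = (f m • m) j0 := fun m _ => rfl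
    rw [Finset.sum_congr rfl hc, ← Finset.sum_apply j0 T (fun m => f m • m), hXf]
    show (if j0 = j0 then xN else 0) = xN
    rw [if_pos rfl]
  · rw [Finset.sum_product]
    have hc : ∀ m ∈ T, (∑ j, g m j0 j • m j) = (g m • m) j0 := fun m _ => rfl
    rw [Finset.sum_congr rfl hc, ← Finset.sum_apply j0 T (fun m => g m • m), hYg]
    show (if j0 = j0 then yN else 0) = yN
    rw [if_pos rfl]
  · rw [Finset.sum_product]
    have hc : ∀ m ∈ T, (∑ j, h m j0 j • m j) = (h m • m) j0 := fun m _ => rfl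
    rw [Finset.sum_congr rfl hc, ← Finset.sum_apply j0 T (fun m => h m • m), hZh]
    show (if j0 = j0 then zN else 0) = zN
    rw [if_pos rfl]
end

section
/- Every semiring S that is both a left CP-semiring and left Gelfand is additively idempotent: s + s = s for all s ∈ S. -/
/-! Call `x` dominated by `y` when `x + c = n • y` for some `c` and `n : ℕ`. Mutual domination
is a congruence on `S` as a left module over itself, with a cyclic, additively idempotent
quotient. If the quotient is projective, the quotient map has a linear section `σ`; then
`ε = σ ⟦1⟧` satisfies `ε + ε = ε` and `1` is dominated by `ε`, say `1 + d = n • ε`. A left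
inverse `g` of `1 + d` gives `n • (g * ε) = 1` with `g * ε` additively idempotent, so
`1 + 1 = 1`. -/

universe u

section Domination

variable {S M : Type*} [AddCommMonoid M]

def AddDominated (x y : M) : Prop :=
  ∃ (n : ℕ) (c : M), x + c = n • y

namespace AddDominated

theorem refl (x : M) : AddDominated x x :=
  ⟨1, 0, by simp⟩

theorem trans {x y z : M} (hxy : AddDominated x y) (hyz : AddDominated y z) :
    AddDominated x z := by
  obtain ⟨n, c, hc⟩ := hxy
  obtain ⟨m, d, hd⟩ := hyz
  refine ⟨m * n, c + n • d, ?_⟩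
  rw [← add_assoc, hc, ← nsmul_add, hd, mul_nsmul]

theorem add {x y x' y' : M} (h : AddDominated x y) (h' : AddDominated x' y') :
    AddDominated (x + x') (y + y') := by
  obtain ⟨n, c, hc⟩ := h
  obtain ⟨m, d, hd⟩ := h'
  refine ⟨n + m, c + m • y + (d + n • y'), ?_⟩
  calc x + x' + (c + m • y + (d + n • y'))
      = (x + c) + m • y + ((x' + d) + n • y') := by abel
    _ = (n + m) • (y + y') := by
      rw [hc, hd, ← add_nsmul, ← add_nsmul, add_comm m n, nsmul_add]

theorem smul [Semiring S] [Module S M] (s : S) {x y : M} (h : AddDominated x y) :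
    AddDominated (s • x) (s • y) := by
  obtain ⟨n, c, hc⟩ := h
  exact ⟨n, s • c, by rw [← smul_add, hc, smul_comm]⟩

end AddDominated

variable [Semiring S] [Module S M]

def ModuleCon.mkₗ_s11 (c : ModuleCon S M) : M →ₗ[S] c.Quotient where
  toFun := Quotient.mk _
  map_add' _ _ := rfl
  map_smul' _ _ := rfl

theorem ModuleCon.mkₗ_surjective_s11 (c : ModuleCon S M) : Function.Surjective c.mkₗ_s11 :=
  Quotient.mk_surjective

variable (S M) in
def dominationCon : ModuleCon S M where
  r x y := AddDominated x y ∧ AddDominated y x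
  iseqv := ⟨fun x ↦ ⟨.refl x, .refl x⟩, And.symm,
    fun h h' ↦ ⟨h.1.trans h'.1, h'.2.trans h.2⟩⟩
  add' h h' := ⟨h.1.add h'.1, h.2.add h'.2⟩
  smul s _ _ h := ⟨h.1.smul s, h.2.smul s⟩

theorem dominationCon.add_self (q : (dominationCon S M).Quotient) : q + q = q := by
  induction q using Quotient.inductionOn with
  | h x =>
    exact Quotient.sound ⟨⟨2, 0, by rw [add_zero, two_nsmul]⟩, ⟨1, x, (one_nsmul _).symm⟩⟩

theorem span_singleton_map_one_eq_top {f : S →ₗ[S] M} (hf : Function.Surjective f) :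
    Submodule.span S {f 1} = ⊤ := by
  refine eq_top_iff.2 fun x _ ↦ Submodule.mem_span_singleton.2 ?_
  obtain ⟨a, rfl⟩ := hf x
  exact ⟨a, by rw [← map_smul, smul_eq_mul, mul_one]⟩

end Domination

theorem one_add_one_eq_one_of_addDominated {S : Type*} [Semiring S]
    (hG : ∀ s : S, ∃ t : S, t * (1 + s) = 1) {ε : S} (hε : ε + ε = ε)
    (h : AddDominated 1 ε) : (1 : S) + 1 = 1 := by
  obtain ⟨n, d, hd⟩ := h
  obtain ⟨g, hg⟩ := hG d
  have hn : n • (g * ε) = 1 := by rw [← mul_smul_comm, ← hd, hg]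
  have hgε : g * ε + g * ε = g * ε := by rw [← mul_add, hε]
  rw [← hn, ← nsmul_add, hgε]

/-- every left CP-semiring which is also left Gelfand (each `1 + s`
has a left inverse) is additively idempotent. -/
theorem addIdempotent_of_leftCP_leftGelfand
    {S : Type u} [Semiring S]
    (hS : IsLeftCPSemiring S)
    (hG : ∀ s : S, ∃ t : S, t * (1 + s) = 1) :
    ∀ s : S, s + s = s := by
  let q := (dominationCon S S).mkₗ_s11
  have : Module.Projective S (dominationCon S S).Quotient :=
    hS _ ⟨q 1, span_singleton_map_one_eq_top (ModuleCon.mkₗ_surjective_s11 _)⟩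
  obtain ⟨σ, hσ⟩ :=
    Module.projective_lifting_property q LinearMap.id (ModuleCon.mkₗ_surjective_s11 _)
  have hε : σ (q 1) + σ (q 1) = σ (q 1) := by rw [← map_add, dominationCon.add_self]
  have hdom : AddDominated 1 (σ (q 1)) := (Quotient.exact (LinearMap.congr_fun hσ (q 1))).2
  have h11 : (1 : S) + 1 = 1 := one_add_one_eq_one_of_addDominated hG hε hdom
  intro s
  rw [← mul_one s, ← mul_add, h11]
end

section
/- Let S be a semiring that is both a left CP-semiring and left Gelfand, and let I be a left ideal of S (I : Ideal S). Then there exist elements e, f ∈ S with e * e = e, f * f = f, e + f = 1, e * f = 0, f * e = 0, and I = Submodule.span S {f} (= Sf). In particular, I is a direct summand of the regular left semimodule: Submodule.span S {e} ⊔ Submodule.span S {f} = ⊤ and Submodule.span S {e} ⊓ Submodule.span S {f} = ⊥. -/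
universe u

namespace CPGelfandAux

variable {S : Type u} [Semiring S]

/-- The Bourne congruence of a left ideal. -/
def bourne (J : Ideal S) : AddCon S where
  r a b := ∃ u ∈ J, ∃ v ∈ J, a + u = b + v
  iseqv := by
    refine ⟨fun a => ⟨0, J.zero_mem, 0, J.zero_mem, rfl⟩, ?_, ?_⟩
    · rintro a b ⟨u, hu, v, hv, h⟩
      exact ⟨v, hv, u, hu, h.symm⟩
    · rintro a b c ⟨u, hu, v, hv, h⟩ ⟨u', hu', v', hv', h'⟩
      refine ⟨u + u', add_mem hu hu', v' + v, add_mem hv' hv, ?_⟩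
      rw [← add_assoc, h, add_right_comm, h', add_right_comm, add_assoc]
      exact congrArg (c + ·) (add_comm v v')
  add' := by
    rintro a b a' b' ⟨u, hu, v, hv, h⟩ ⟨u', hu', v', hv', h'⟩
    refine ⟨u + u', add_mem hu hu', v + v', add_mem hv hv', ?_⟩
    rw [add_add_add_comm, h, h', add_add_add_comm]

/-- The Bourne quotient semimodule of `S` by a left ideal. -/
def BQ (J : Ideal S) : Type u := (bourne J).Quotient

instance (J : Ideal S) : AddCommMonoid (BQ J) :=
  inferInstanceAs (AddCommMonoid (bourne J).Quotient)

/-- `mk` for the Bourne quotient. -/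
def mkQ (J : Ideal S) (a : S) : BQ J := Quotient.mk'' a

lemma mkQ_add (J : Ideal S) (a b : S) : mkQ J (a + b) = mkQ J a + mkQ J b := rfl

lemma mkQ_surjective (J : Ideal S) : Function.Surjective (mkQ J) := fun x =>
  Quotient.inductionOn' x fun a => ⟨a, rfl⟩

lemma mkQ_eq_of (J : Ideal S) {a b : S} (h : ∃ u ∈ J, ∃ v ∈ J, a + u = b + v) :
    mkQ J a = mkQ J b := Quotient.sound' h

lemma rel_of_mkQ_eq (J : Ideal S) {a b : S} (h : mkQ J a = mkQ J b) :
    ∃ u ∈ J, ∃ v ∈ J, a + u = b + v := Quotient.exact' h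

instance (J : Ideal S) : Module S (BQ J) where
  smul s x := Quotient.map' (fun a => s * a)
    (by
      rintro a b ⟨u, hu, v, hv, h⟩
      refine ⟨s * u, by simpa using J.smul_mem s hu, s * v, by simpa using J.smul_mem s hv, ?_⟩
      rw [← mul_add, h, mul_add]) x
  one_smul x := Quotient.inductionOn' x fun a =>
    congrArg (Quotient.mk'' : S → BQ J) (one_mul a)
  mul_smul s t x := Quotient.inductionOn' x fun a =>
    congrArg (Quotient.mk'' : S → BQ J) (mul_assoc s t a)
  smul_zero s := congrArg (Quotient.mk'' : S → BQ J) (mul_zero s)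
  smul_add s x y := Quotient.inductionOn₂' x y fun a b =>
    congrArg (Quotient.mk'' : S → BQ J) (mul_add s a b)
  add_smul s t x := Quotient.inductionOn' x fun a =>
    congrArg (Quotient.mk'' : S → BQ J) (add_mul s t a)
  zero_smul x := Quotient.inductionOn' x fun a =>
    congrArg (Quotient.mk'' : S → BQ J) (zero_mul a)

lemma smul_mkQ (J : Ideal S) (s a : S) : s • mkQ J a = mkQ J (s * a) := rfl

/-- The quotient map as a linear map. -/
def mkL (J : Ideal S) : S →ₗ[S] BQ J where
  toFun := mkQ J
  map_add' := mkQ_add J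
  map_smul' s a := rfl

lemma span_mkQ_one (J : Ideal S) : Submodule.span S {mkQ J 1} = ⊤ := by
  rw [Submodule.eq_top_iff']
  intro x
  obtain ⟨a, rfl⟩ := mkQ_surjective J x
  exact Submodule.mem_span_singleton.mpr ⟨a, by rw [smul_mkQ, mul_one]⟩

/-- Main auxiliary lemma: in a left CP, left Gelfand semiring, every left ideal `J`
admits an idempotent `e` with `e + f = 1` for some `f ∈ J`, such that `J * e = 0`
and right multiplication by `e` is constant on Bourne classes. -/
theorem lemma1 (hS : IsLeftCPSemiring S)
    (hG : ∀ s : S, ∃ t : S, t * (1 + s) = 1) (J : Ideal S) :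
    ∃ e f : S, e * e = e ∧ e + f = 1 ∧ f ∈ J ∧ (∀ x ∈ J, x * e = 0) ∧
      ∀ a b : S, (∃ u ∈ J, ∃ v ∈ J, a + u = b + v) → a * e = b * e := by
  have hproj : Module.Projective S (BQ J) := hS (BQ J) ⟨mkQ J 1, span_mkQ_one J⟩
  obtain ⟨σ, hσ⟩ := Module.projective_lifting_property (mkL J) (LinearMap.id)
    (mkQ_surjective J)
  set e : S := σ (mkQ J 1) with he_def
  have hσs : ∀ s : S, σ (mkQ J s) = s * e := by
    intro s
    have h1 : mkQ J s = s • mkQ J 1 := by rw [smul_mkQ, mul_one]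
    rw [h1, map_smul, smul_eq_mul, he_def]
  have sat : ∀ a b : S, (∃ u ∈ J, ∃ v ∈ J, a + u = b + v) → a * e = b * e := by
    intro a b h
    have h2 : mkQ J a = mkQ J b := mkQ_eq_of J h
    have h3 := congrArg σ h2
    rwa [hσs, hσs] at h3
  have hJe : ∀ x ∈ J, x * e = 0 := by
    intro x hx
    have h4 := sat x 0 ⟨0, J.zero_mem, x, hx, by rw [add_zero, zero_add]⟩
    rwa [zero_mul] at h4
  have hmk_e : mkQ J e = mkQ J 1 := by
    have h5 := LinearMap.ext_iff.mp hσ (mkQ J 1)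
    exact h5
  obtain ⟨a, ha, b, hb, heq⟩ := rel_of_mkQ_eq J hmk_e
  have hee : e * e = e := by
    have h6 := congrArg (fun z => z * e) heq
    simp only [add_mul, one_mul] at h6
    rwa [hJe a ha, hJe b hb, add_zero, add_zero] at h6
  obtain ⟨t, ht⟩ := hG b
  have ht' : t * e + t * a = 1 := by
    rw [← mul_add, heq, ht]
  have hte : t * e = e := by
    have h7 := congrArg (fun z => z * e) ht'
    simp only [add_mul, one_mul, mul_assoc] at h7
    rwa [hee, hJe a ha, mul_zero, add_zero] at h7
  refine ⟨e, t * a, hee, by rwa [hte] at ht',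
    by simpa using J.smul_mem t ha, hJe, sat⟩

end CPGelfandAux

/-- in a left CP- and left Gelfand semiring, every left ideal `I`
equals `Sf` for a pair of complementary orthogonal idempotents `e`, `f`; in
particular `I` is a direct summand of the regular left semimodule. -/
theorem ideal_is_direct_summand_of_leftCP_leftGelfand
    {S : Type u} [Semiring S]
    (hS : IsLeftCPSemiring S)
    (hG : ∀ s : S, ∃ t : S, t * (1 + s) = 1)
    (I : Ideal S) :
    ∃ e f : S, e * e = e ∧ f * f = f ∧ e + f = 1 ∧ e * f = 0 ∧ f * e = 0 ∧
      I = Submodule.span S {f} ∧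
      Submodule.span S {e} ⊔ Submodule.span S {f} = ⊤ ∧
      Submodule.span S {e} ⊓ Submodule.span S {f} = ⊥ := by
  classical
  -- Step 0: zerosumfreeness of S.
  have hzs : ∀ a b : S, a + b = 0 → a = 0 := by
    set V : Ideal S :=
      { carrier := {a : S | ∃ b : S, a + b = 0}
        add_mem' := by
          rintro x y ⟨bx, hbx⟩ ⟨by', hby⟩
          exact ⟨bx + by', by rw [add_add_add_comm, hbx, hby, add_zero]⟩
        zero_mem' := ⟨0, add_zero 0⟩
        smul_mem' := by
          rintro c x ⟨bx, hbx⟩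
          exact ⟨c * bx, by rw [smul_eq_mul, ← mul_add, hbx, mul_zero]⟩ } with hV
    obtain ⟨eV, fV, heV, hV1, hfV, hVe, -⟩ := CPGelfandAux.lemma1 hS hG V
    obtain ⟨b, hb⟩ := hfV
    have h1b : 1 + b = eV := by rw [← hV1, add_assoc, hb, add_zero]
    obtain ⟨τ, hτ⟩ := hG b
    rw [h1b] at hτ
    have heV1 : eV = (1 : S) := by
      calc eV = 1 * eV := (one_mul eV).symm
        _ = (τ * eV) * eV := by rw [hτ]
        _ = τ * (eV * eV) := by rw [mul_assoc]
        _ = τ * eV := by rw [heV]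
        _ = 1 := hτ
    intro a b hab
    have haV : a ∈ V := ⟨b, hab⟩
    have := hVe a haV
    rwa [heV1, mul_one] at this
  -- Step 1: apply lemma1 to I.
  obtain ⟨e, f, hee, hef1, hfI, hIe, hsat⟩ := CPGelfandAux.lemma1 hS hG I
  have hfe : f * e = 0 := hIe f hfI
  have hxf : ∀ x ∈ I, x * f = x := by
    intro x hx
    have h1 : x * (e + f) = x := by rw [hef1, mul_one]
    rwa [mul_add, hIe x hx, zero_add] at h1
  have hff : f * f = f := hxf f hfI
  -- Step 2: apply lemma1 to span {e}.
  obtain ⟨e', f', he'e', h1', hf'J', hJ'e', hsat'⟩ :=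
    CPGelfandAux.lemma1 hS hG (Submodule.span S {e})
  have he_mem : e ∈ Submodule.span S {e} := Submodule.mem_span_singleton_self e
  have hee' : e * e' = 0 := hJ'e' e he_mem
  obtain ⟨c, hc⟩ := Submodule.mem_span_singleton.mp hf'J'
  have hf'e : f' * e = f' := by
    rw [← hc, smul_eq_mul, mul_assoc, hee]
  have hfe' : f * e' = e' := by
    have h2 := hsat' f 1
      ⟨e, he_mem, 0, Submodule.zero_mem _, by rw [add_zero, add_comm, hef1]⟩
    rwa [one_mul] at h2
  -- Step 3: kill e' * e using zerosumfreeness.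
  have he_split : e = e' * e + f' := by
    calc e = 1 * e := (one_mul e).symm
      _ = (e' + f') * e := by rw [h1']
      _ = e' * e + f' * e := add_mul _ _ _
      _ = e' * e + f' := by rw [hf'e]
  have hzero : e' * e + f * f' = 0 := by
    have h3 : f * e = e' * e + f * f' := by
      conv_lhs => rw [he_split]
      rw [mul_add, ← mul_assoc, hfe']
    rw [hfe] at h3
    exact h3.symm
  have hx0 : e' * e = 0 := hzs _ _ hzero
  have hef' : e = f' := by rw [he_split, hx0, zero_add]
  have h1'' : e' + e = 1 := by rw [hef']; exact h1'
  -- Step 4: e * f = 0.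
  have hef0 : e * f = 0 := by
    have h5 : e * f * e' = 0 := by
      rw [mul_assoc, hfe', hee']
    have h6 : e * f * e = 0 := by
      rw [mul_assoc, hfe, mul_zero]
    calc e * f = e * f * 1 := (mul_one _).symm
      _ = e * f * (e' + e) := by rw [h1'']
      _ = e * f * e' + e * f * e := mul_add _ _ _
      _ = 0 := by rw [h5, h6, add_zero]
  -- Final assembly.
  refine ⟨e, f, hee, hff, hef1, hef0, hfe, ?_, ?_, ?_⟩
  · -- I = span {f}
    refine le_antisymm ?_ ?_
    · intro x hx
      exact Submodule.mem_span_singleton.mpr ⟨x, by rw [smul_eq_mul, hxf x hx]⟩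
    · rw [Submodule.span_le, Set.singleton_subset_iff]
      exact hfI
  · -- sup = ⊤
    rw [Submodule.eq_top_iff']
    intro y
    have h1m : (1 : S) ∈ Submodule.span S {e} ⊔ Submodule.span S {f} := by
      rw [← hef1]
      exact add_mem (Submodule.mem_sup_left (Submodule.mem_span_singleton_self e))
        (Submodule.mem_sup_right (Submodule.mem_span_singleton_self f))
    have := Submodule.smul_mem _ y h1m
    rwa [smul_eq_mul, mul_one] at this
  · -- inf = ⊥
    rw [eq_bot_iff]
    intro x hx
    rw [Submodule.mem_inf] at hx
    obtain ⟨cx, hcx⟩ := Submodule.mem_span_singleton.mp hx.1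
    obtain ⟨dx, hdx⟩ := Submodule.mem_span_singleton.mp hx.2
    have hxe : x * e = x := by
      rw [← hcx, smul_eq_mul, mul_assoc, hee]
    have hxe0 : x * e = 0 := by
      rw [← hdx, smul_eq_mul, mul_assoc, hfe, mul_zero]
    rw [Submodule.mem_bot, ← hxe, hxe0]
end

section
/- Let S be a left Gelfand semiring. Then S is a left CP-semiring if and only if S is (as a semiring) a finite Boolean algebra. -/
universe u

/-- A semiring is (as a semiring) a finite Boolean algebra: it is finite and
carries a Boolean algebra structure whose join is the addition and whose meet is
the multiplication. -/
def IsFiniteBooleanAlgebraSemiring (T : Type u) [Semiring T] : Prop :=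
  Finite T ∧ ∃ _ : BooleanAlgebra T,
    (∀ a b : T, a + b = a ⊔ b) ∧ (∀ a b : T, a * b = a ⊓ b)

set_option maxHeartbeats 1000000

namespace CPaux13
section Splitter
variable {S : Type u} [Semiring S]

theorem exists_splitter (hCP : IsLeftCPSemiring S) (c : AddCon S)
    (hc : ∀ (a : S) ⦃x y : S⦄, c x y → c (a * x) (a * y)) :
    ∃ e : S, e * e = e ∧ (∀ x y, c x y → x * e = y * e) ∧ (∀ x, c (x * e) x) := by
  letI : SMul S c.Quotient :=
    ⟨fun a => Quotient.map' (fun x => a * x) (fun x y h => hc a h)⟩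
  have smul_mk : ∀ (a x : S), a • (x : c.Quotient) = ((a * x : S) : c.Quotient) :=
    fun a x => rfl
  letI : Module S c.Quotient :=
    { smul := fun a => Quotient.map' (fun x => a * x) (fun x y h => hc a h)
      one_smul := by
        rintro ⟨x⟩
        show ((1 * x : S) : c.Quotient) = (x : S)
        rw [one_mul]
      mul_smul := by
        rintro a b ⟨x⟩
        show ((a * b * x : S) : c.Quotient) = ((a * (b * x) : S) : c.Quotient)
        rw [mul_assoc]
      smul_zero := by
        intro a
        show ((a * 0 : S) : c.Quotient) = ((0 : S) : c.Quotient)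
        rw [mul_zero]
      smul_add := by
        rintro a ⟨x⟩ ⟨y⟩
        show ((a * (x + y) : S) : c.Quotient) = ((a * x : S) : c.Quotient) + ((a * y : S) : c.Quotient)
        rw [← AddCon.coe_add, mul_add]
      add_smul := by
        rintro a b ⟨x⟩
        show (((a + b) * x : S) : c.Quotient) = ((a * x : S) : c.Quotient) + ((b * x : S) : c.Quotient)
        rw [← AddCon.coe_add, add_mul]
      zero_smul := by
        rintro ⟨x⟩
        show ((0 * x : S) : c.Quotient) = ((0 : S) : c.Quotient)
        rw [zero_mul] }
  let π : S →ₗ[S] c.Quotient :=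
    { toFun := fun x => (x : c.Quotient)
      map_add' := fun x y => AddCon.coe_add x y
      map_smul' := fun a x => rfl }
  have hπsurj : Function.Surjective π := fun q => Quotient.inductionOn' q fun x => ⟨x, rfl⟩

  have hcyc : ∃ m : c.Quotient, Submodule.span S {m} = ⊤ := by
    refine ⟨((1 : S) : c.Quotient), ?_⟩
    rw [Submodule.eq_top_iff']
    intro q
    refine Quotient.inductionOn' q (fun x => ?_)
    refine Submodule.mem_span_singleton.mpr ?_
    refine ⟨x, ?_⟩
    rw [smul_mk, mul_one]
    rfl
  haveI : Module.Projective S c.Quotient := hCP _ hcyc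
  obtain ⟨h, hh⟩ := Module.projective_lifting_property π LinearMap.id hπsurj
  have hsec : ∀ q : c.Quotient, π (h q) = q := fun q => congrArg (fun f => f q) (congrArg DFunLike.coe hh)
  set e := h ((1 : S) : c.Quotient) with he
  have hlin : ∀ z : S, h ((z : S) : c.Quotient) = z * e := by
    intro z
    have h1 : ((z : S) : c.Quotient) = z • ((1 : S) : c.Quotient) := by rw [smul_mk, mul_one]
    rw [h1, map_smul]
    rfl
  have hmke : ∀ z : S, ((z * e : S) : c.Quotient) = ((z :S) : c.Quotient) := by
    intro z
    have := hsec ((z : S) : c.Quotient)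
    rw [hlin z] at this
    exact this
  refine ⟨e, ?_, ?_, ?_⟩
  · have := congrArg h (hmke 1)
    rw [hlin (1 * e), one_mul] at this
    exact this.trans he.symm
  · intro x y hxy
    have h1 : ((x : S) : c.Quotient) = ((y : S) : c.Quotient) := Quotient.sound' hxy
    have := congrArg h h1
    rwa [hlin x, hlin y] at this
  · intro x
    exact c.eq.mp (hmke x)

theorem mul_nsmulr (a y : S) (n : ℕ) : a * (n • y) = n • (a * y) := by
  induction n with
  | zero => simp
  | succ k ih => rw [succ_nsmul, succ_nsmul, mul_add, ih]

theorem nsmul_idem {e : S} (he : e + e = e) (k : ℕ) : (k + 1) • e = e := by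
  induction k with
  | zero => rw [one_nsmul]
  | succ k ih => rw [succ_nsmul, ih, he]

theorem one_add_one (hCP : IsLeftCPSemiring S)
    (hG : ∀ s : S, ∃ t : S, t * (1 + s) = 1) : (1 : S) + 1 = 1 := by
  set σ : AddCon S :=
    { r := fun x y => ∃ n m : ℕ, (∃ w, x + w = n • y) ∧ (∃ w, y + w = m • x)
      iseqv := by
        constructor
        · exact fun x => ⟨1, 1, ⟨0, by rw [add_zero, one_nsmul]⟩, ⟨0, by rw [add_zero, one_nsmul]⟩⟩
        · rintro x y ⟨n, m, h1, h2⟩; exact ⟨m, n, h2, h1⟩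
        · rintro x y z ⟨n, m, ⟨w1, hw1⟩, ⟨w2, hw2⟩⟩ ⟨p, q, ⟨w3, hw3⟩, ⟨w4, hw4⟩⟩
          refine ⟨p * n, m * q, ⟨w1 + n • w3, ?_⟩, ⟨w4 + q • w2, ?_⟩⟩
          · rw [← add_assoc, hw1, ← smul_add, hw3, mul_nsmul] 
          · rw [← add_assoc, hw4, ← smul_add, hw2, mul_nsmul]
      add' := by
        rintro x y u v ⟨n, m, ⟨w1, hw1⟩, ⟨w2, hw2⟩⟩ ⟨p, q, ⟨w3, hw3⟩, ⟨w4, hw4⟩⟩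
        refine ⟨n + p, m + q, ⟨w1 + w3 + (n • v + p • y), ?_⟩, ⟨w2 + w4 + (m • u + q • x), ?_⟩⟩
        · rw [add_nsmul, smul_add, smul_add]
          calc x + u + (w1 + w3 + (n • v + p • y))
              = (x + w1) + (u + w3) + (n • v + p • y) := by abel
            _ = n • y + p • v + (n • v + p • y) := by rw [hw1, hw3]
            _ = n • y + n • v + (p • y + p • v) := by abel
        · rw [add_nsmul, smul_add, smul_add]
          calc y + v + (w2 + w4 + (m • u + q • x))
              = (y + w2) + (v + w4) + (m • u + q • x) := by abel
            _ = m • x + q • u + (m • u + q • x) := by rw [hw2, hw4]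
            _ = m • x + m • u + (q • x + q • u) := by abel }
    with hσ
  have hsm : ∀ (a : S) ⦃x y : S⦄, σ x y → σ (a * x) (a * y) := by
    rintro a x y ⟨n, m, ⟨w1, hw1⟩, ⟨w2, hw2⟩⟩
    refine ⟨n, m, ⟨a * w1, ?_⟩, ⟨a * w2, ?_⟩⟩
    · rw [← mul_add, hw1, mul_nsmulr]
    · rw [← mul_add, hw2, mul_nsmulr]
  obtain ⟨e, hee, hii, hi⟩ := exists_splitter hCP σ hsm
  have h12 : σ 1 (1 + 1) :=
    ⟨1, 2, ⟨1, by rw [one_nsmul]⟩, ⟨0, by rw [add_zero, two_nsmul]⟩⟩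
  have heidem : e + e = e := by
    have := hii 1 (1 + 1) h12
    rw [one_mul, add_mul, one_mul] at this
    exact this.symm
  obtain ⟨n, m, _, ⟨w2, hw2⟩⟩ : σ e 1 := by simpa using hi 1
  match m with
  | 0 =>
    rw [zero_nsmul] at hw2
    obtain ⟨t, ht⟩ := hG w2
    rw [hw2, mul_zero] at ht
    have hz : ∀ x : S, x = 0 := fun x => by rw [← mul_one x, ← ht, mul_zero]
    rw [hz (1 + 1), hz 1]
  | m + 1 =>
    rw [nsmul_idem heidem] at hw2
    obtain ⟨t, ht⟩ := hG w2
    rw [hw2] at ht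
    calc (1 : S) + 1 = t * e + t * e := by rw [ht]
      _ = t * (e + e) := by rw [mul_add]
      _ = 1 := by rw [heidem, ht]

end Splitter

section MainIdem
variable {S : Type u} [Semiring S]

set_option linter.unusedSectionVars false in
theorem le_trans' {S : Type u} [Semiring S] {x y z : S} (h1 : x + y = y) (h2 : y + z = z) : x + z = z := by
  rw [← h2, ← add_assoc, h1]

section Idem
variable (hCP : IsLeftCPSemiring S) (hG : ∀ s : S, ∃ t : S, t * (1 + s) = 1)
include hCP hG

theorem add_idem (a : S) : a + a = a := by
  have := one_add_one hCP hG
  calc a + a = a * (1 + 1) := by rw [mul_add, mul_one]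
    _ = a := by rw [this, mul_one]

theorem le_mull {x y : S} (a : S) (h : x + y = y) : a * x + a * y = a * y := by
  rw [← mul_add, h]

theorem le_mulr {x y : S} (a : S) (h : x + y = y) : x * a + y * a = y * a := by
  rw [← add_mul, h]

theorem le_add {x y u v : S} (h1 : x + y = y) (h2 : u + v = v) :
    (x + u) + (y + v) = y + v := by
  calc (x + u) + (y + v) = (x + y) + (u + v) := by abel
    _ = y + v := by rw [h1, h2]

theorem one_le_pow (r : S) (h1r : 1 + r = r) (n : ℕ) : 1 + r ^ n = r ^ n := by
  induction n with
  | zero => rw [pow_zero]; exact one_add_one hCP hG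
  | succ k ih =>
    have h1 : 1 * 1 + r ^ k * 1 = r ^ k * 1 := le_mulr hCP hG 1 ih
    rw [mul_one, mul_one] at h1
    have h2 : r ^ k * 1 + r ^ k * r = r ^ k * r := le_mull hCP hG (r ^ k) h1r
    rw [mul_one] at h2
    rw [pow_succ]
    exact le_trans' h1 h2

theorem top (s : S) : 1 + s = 1 := by
  set r : S := 1 + s with hr
  have h1r : 1 + r = r := by rw [hr, ← add_assoc, one_add_one hCP hG]
  have hpow := one_le_pow hCP hG r h1r
  -- powers are increasing
  have hple : ∀ k m : ℕ, r ^ k + r ^ (k + m) = r ^ (k + m) := by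
    intro k m
    have := le_mull hCP hG (r ^ k) (hpow m)
    rw [mul_one, ← pow_add] at this
    exact this
  set Ψ : AddCon S :=
    { r := fun x y => ∃ n : ℕ, (x + y * r ^ n = y * r ^ n) ∧ (y + x * r ^ n = x * r ^ n)
      iseqv := by
        constructor
        · intro x
          exact ⟨0, by rw [pow_zero, mul_one]; exact ⟨add_idem hCP hG x, add_idem hCP hG x⟩⟩
        · rintro x y ⟨n, h1, h2⟩; exact ⟨n, h2, h1⟩
        · rintro x y z ⟨n, h1, h2⟩ ⟨m, h3, h4⟩
          refine ⟨n + m, ?_, ?_⟩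
          · -- x ≼ y r^n, y ≼ z r^m so x ≼ z r^(n+m)
            have : y * r ^ n + z * r ^ m * r ^ n = z * r ^ m * r ^ n := le_mulr hCP hG _ h3
            rw [mul_assoc, ← pow_add] at this
            have h5 : z * r ^ (m + n) = z * r ^ (n + m) := by rw [Nat.add_comm]
            rw [h5] at this
            exact le_trans' h1 this
          · have : y * r ^ m + x * r ^ n * r ^ m = x * r ^ n * r ^ m := le_mulr hCP hG _ h2
            rw [mul_assoc, ← pow_add] at this
            exact le_trans' h4 this
      add' := by
        rintro x y u v ⟨n, h1, h2⟩ ⟨m, h3, h4⟩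
        have key : ∀ (a b c d : S) (hn : a + b * r ^ n = b * r ^ n) (hm : c + d * r ^ m = d * r ^ m),
            (a + c) + (b + d) * r ^ (n + m) = (b + d) * r ^ (n + m) := by
          intro a b c d hn hm
          have hb : b * r ^ n + b * r ^ (n + m) = b * r ^ (n + m) := by
            have := le_mull hCP hG b (hple n m); exact this
          have hd : d * r ^ m + d * r ^ (m + n) = d * r ^ (m + n) := by
            have := le_mull hCP hG d (hple m n); exact this
          rw [Nat.add_comm m n] at hd
          have ha : a + b * r ^ (n + m) = b * r ^ (n + m) := le_trans' hn hb
          have hc : c + d * r ^ (n + m) = d * r ^ (n + m) := le_trans' hm hd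
          have := le_add hCP hG ha hc
          rw [← add_mul] at this
          exact this
        exact ⟨n + m, key x y u v h1 h3, key y x v u h2 h4⟩ }
    with hΨ
  have hsm : ∀ (a : S) ⦃x y : S⦄, Ψ x y → Ψ (a * x) (a * y) := by
    rintro a x y ⟨n, h1, h2⟩
    refine ⟨n, ?_, ?_⟩
    · have := le_mull hCP hG a h1; rwa [← mul_assoc] at this
    · have := le_mull hCP hG a h2; rwa [← mul_assoc] at this
  obtain ⟨c, hcc, hii, hi⟩ := exists_splitter hCP Ψ hsm
  -- r^k * c = c
  have hrkc : ∀ k : ℕ, r ^ k * c = c := by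
    intro k
    have h1k : Ψ 1 (r ^ k) := by
      refine ⟨k, ?_, ?_⟩
      · rw [← pow_add]
        exact hpow (k + k)
      · rw [one_mul]; exact add_idem hCP hG _
    have := hii 1 (r ^ k) h1k
    rw [one_mul] at this
    exact this.symm
  obtain ⟨n, hc1, h1c⟩ : Ψ c 1 := by
    have := hi 1; rwa [one_mul] at this
  -- 1 + c * r^n = c * r^n, Gelfand
  obtain ⟨T, hT⟩ := hG (c * r ^ n)
  rw [h1c] at hT
  have hTc : T * c = c := by
    have := congrArg (fun z => z * c) hT
    rwa [one_mul, mul_assoc, mul_assoc, hrkc n, hcc] at this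
  have hcrn : c * r ^ n = 1 := by rw [← hT, ← mul_assoc, hTc]
  calc 1 + s = r := rfl
    _ = r * (c * r ^ n) := by rw [hcrn, mul_one]
    _ = (r * c) * r ^ n := by rw [mul_assoc]
    _ = c * r ^ n := by
        have := hrkc 1; rw [pow_one] at this; rw [this]
    _ = 1 := hcrn

theorem compl_half (s : S) : ∃ c : S, (s + c = 1) ∧ s * c = 0 := by
  set τ : AddCon S :=
    { r := fun x y => ∃ u : S, x + u * s = y + u * s
      iseqv := by
        constructor
        · exact fun x => ⟨0, rfl⟩
        · rintro x y ⟨u, hu⟩; exact ⟨u, hu.symm⟩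
        · rintro x y z ⟨u, hu⟩ ⟨v, hv⟩
          refine ⟨u + v, ?_⟩
          calc x + (u + v) * s = (x + u * s) + v * s := by rw [add_mul]; abel
            _ = (y + v * s) + u * s := by rw [hu]; abel
            _ = (z + u * s) + v * s := by rw [hv]; abel
            _ = z + (u + v) * s := by rw [add_mul]; abel
      add' := by
        rintro x y u v ⟨a, ha⟩ ⟨b, hb⟩
        refine ⟨a + b, ?_⟩
        calc x + u + (a + b) * s = (x + a * s) + (u + b * s) := by rw [add_mul]; abel
          _ = (y + a * s) + (v + b * s) := by rw [ha, hb]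
          _ = y + v + (a + b) * s := by rw [add_mul]; abel }
    with hτ
  have hsm : ∀ (a : S) ⦃x y : S⦄, τ x y → τ (a * x) (a * y) := by
    rintro a x y ⟨u, hu⟩
    refine ⟨a * u, ?_⟩
    have := congrArg (fun z => a * z) hu
    rwa [mul_add, mul_add, ← mul_assoc] at this
  obtain ⟨c, hcc, hii, hi⟩ := exists_splitter hCP τ hsm
  have hsc : s * c = 0 := by
    have h0 : τ s 0 := ⟨1, by rw [one_mul, zero_add]; exact add_idem hCP hG s⟩
    have := hii s 0 h0
    rwa [zero_mul] at this
  obtain ⟨u, hu⟩ : τ c 1 := by have := hi 1; rwa [one_mul] at this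
  rw [top hCP hG (u * s)] at hu
  have hus : u * s + s = s := by
    have h2 : (u + 1) * s = 1 * s := by rw [add_comm u 1, top hCP hG u]
    rw [add_mul, one_mul] at h2
    exact h2
  have hcs1 : c + s = 1 := by
    have h3 := congrArg (fun z => z + s) hu
    rwa [add_assoc, hus, top hCP hG s] at h3
  exact ⟨c, by rw [add_comm]; exact hcs1, hsc⟩

theorem mul_idem (a : S) : a * a = a := by
  obtain ⟨c, h1, h2⟩ := compl_half hCP hG a
  calc a * a = a * a + 0 := by rw [add_zero]
    _ = a * a + a * c := by rw [h2]
    _ = a * (a + c) := by rw [mul_add]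
    _ = a := by rw [h1, mul_one]

theorem compl_exists (s : S) : ∃ c : S, (s + c = 1) ∧ s * c = 0 ∧ c * s = 0 := by
  obtain ⟨c, h1, h2⟩ := compl_half hCP hG s
  refine ⟨c, h1, h2, ?_⟩
  have := mul_idem hCP hG (c * s)
  rw [mul_assoc, ← mul_assoc s c s, h2, zero_mul, mul_zero] at this
  exact this.symm

end Idem


section Idem2
variable (hCP : IsLeftCPSemiring S) (hG : ∀ s : S, ∃ t : S, t * (1 + s) = 1)
include hCP hG
theorem le_mul_left (a b : S) : a * b + a = a := by
  have hb1 : b + 1 = 1 := by rw [add_comm]; exact top hCP hG b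
  calc a * b + a = a * (b + 1) := by rw [mul_add, mul_one]
    _ = a := by rw [hb1, mul_one]

theorem le_mul_right (a b : S) : a * b + b = b := by
  have ha1 : a + 1 = 1 := by rw [add_comm]; exact top hCP hG a
  calc a * b + b = (a + 1) * b := by rw [add_mul, one_mul]
    _ = b := by rw [ha1, one_mul]

theorem le_inf' {x a b : S} (h1 : x + a = a) (h2 : x + b = b) : x + a * b = a * b := by
  have k1 : x * x + x * b = x * b := by rw [← mul_add, h2]
  have k2 : x * b + a * b = a * b := by rw [← add_mul, h1]
  have := le_trans' k1 k2
  rwa [mul_idem hCP hG x] at this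
  
theorem mul_comm' (a b : S) : a * b = b * a := by
  have h1 : a * b + b * a = b * a :=
    le_inf' hCP hG (le_mul_right hCP hG a b) (le_mul_left hCP hG a b)
  have h2 : b * a + a * b = a * b :=
    le_inf' hCP hG (le_mul_right hCP hG b a) (le_mul_left hCP hG b a)
  rw [← h1, add_comm, h2]

theorem sup_le' {a b c : S} (h1 : a + c = c) (h2 : b + c = c) : (a + b) + c = c := by
  rw [add_assoc, h2, h1]


end Idem2

noncomputable def mkBA (hCP : IsLeftCPSemiring S)
    (hG : ∀ s : S, ∃ t : S, t * (1 + s) = 1) : BooleanAlgebra S where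
  le a b := a + b = b
  sup a b := a + b
  inf a b := a * b
  bot := 0
  top := 1
  compl a := Classical.choose (compl_exists hCP hG a)
  sdiff a b := a * Classical.choose (compl_exists hCP hG b)
  himp a b := b + Classical.choose (compl_exists hCP hG a)
  le_refl a := add_idem hCP hG a
  le_trans a b c := le_trans'
  le_antisymm a b h1 h2 := by
    show a = b
    conv_lhs => rw [← h2]
    rw [add_comm, h1]
  le_sup_left a b := by
    show a + (a + b) = a + b
    rw [← add_assoc, add_idem hCP hG]
  le_sup_right a b := by
    show b + (a + b) = a + b
    rw [add_comm a b, ← add_assoc, add_idem hCP hG]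
  sup_le a b c h1 h2 := sup_le' hCP hG h1 h2
  inf_le_left a b := le_mul_left hCP hG a b
  inf_le_right a b := le_mul_right hCP hG a b
  le_inf a b c h1 h2 := le_inf' hCP hG h1 h2
  le_sup_inf x y z := by
    show (x + y) * (x + z) + (x + y * z) = x + y * z
    have e1 : (x + y) * (x + z) = (x * x + x * z + y * x) + y * z := by
      rw [add_mul, mul_add, mul_add]; abel
    have c1 : x * x + x = x := by rw [mul_idem hCP hG x]; exact add_idem hCP hG x
    have c2 : x * z + x = x := le_mul_left hCP hG x z
    have c3 : y * x + x = x := le_mul_right hCP hG y x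
    have c4 : (x * x + x * z + y * x) + x = x := sup_le' hCP hG (sup_le' hCP hG c1 c2) c3
    calc (x + y) * (x + z) + (x + y * z)
        = ((x * x + x * z + y * x) + x) + (y * z + y * z) := by rw [e1]; abel
      _ = x + y * z := by rw [c4, add_idem hCP hG]
  inf_compl_le_bot a := by
    show a * Classical.choose (compl_exists hCP hG a) + 0 = 0
    rw [(Classical.choose_spec (compl_exists hCP hG a)).2.1, add_zero]
  top_le_sup_compl a := by
    show 1 + (a + Classical.choose (compl_exists hCP hG a)) = a + Classical.choose (compl_exists hCP hG a)
    rw [(Classical.choose_spec (compl_exists hCP hG a)).1, add_idem hCP hG]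
  le_top a := by show a + 1 = 1; rw [add_comm]; exact top hCP hG a
  bot_le a := zero_add a
  sdiff_eq a b := rfl
  himp_eq a b := by show _ = b + Classical.choose (compl_exists hCP hG a); rfl



section Fin
variable (hCP : IsLeftCPSemiring S) (hG : ∀ s : S, ∃ t : S, t * (1 + s) = 1)
include hCP hG
/-- every "ideal" has a maximum element -/
theorem princ
    (P : S → Prop) (h0 : P 0)
    (hdown : ∀ x y : S, x + y = y → P y → P x)
    (hadd : ∀ x y : S, P x → P y → P (x + y)) :
    ∃ M : S, P M ∧ ∀ x, P x → x + M = M := by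
  set ρ : AddCon S :=
    { r := fun x y => ∃ u : S, P u ∧ x + u = y + u
      iseqv := by
        constructor
        · exact fun x => ⟨0, h0, rfl⟩
        · rintro x y ⟨u, hu, h⟩; exact ⟨u, hu, h.symm⟩
        · rintro x y z ⟨u, hu, h1⟩ ⟨v, hv, h2⟩
          refine ⟨u + v, hadd u v hu hv, ?_⟩
          calc x + (u + v) = (x + u) + v := by abel
            _ = (y + v) + u := by rw [h1]; abel
            _ = (z + v) + u := by rw [h2]
            _ = z + (u + v) := by abel
      add' := by
        rintro x y u v ⟨a, ha, h1⟩ ⟨b, hb, h2⟩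
        refine ⟨a + b, hadd a b ha hb, ?_⟩
        calc x + u + (a + b) = (x + a) + (u + b) := by abel
          _ = (y + a) + (v + b) := by rw [h1, h2]
          _ = y + v + (a + b) := by abel }
    with hρ
  have hsm : ∀ (a : S) ⦃x y : S⦄, ρ x y → ρ (a * x) (a * y) := by
    rintro a x y ⟨u, hu, h⟩
    refine ⟨a * u, hdown (a * u) u (le_mul_right hCP hG a u) hu, ?_⟩
    rw [← mul_add, ← mul_add, h]
  obtain ⟨c, hcc, hii, hi⟩ := exists_splitter hCP ρ hsm
  have hPc : ∀ x, P x → x * c = 0 := by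
    intro x hx
    have h0x : ρ x 0 := ⟨x, hx, by rw [add_idem hCP hG, zero_add]⟩
    have := hii x 0 h0x
    rwa [zero_mul] at this
  obtain ⟨u, hu, hcu⟩ : ρ c 1 := by have := hi 1; rwa [one_mul] at this
  rw [top hCP hG u] at hcu
  obtain ⟨d, hd1, hd2, hd3⟩ := compl_exists hCP hG c
  refine ⟨d, ?_, ?_⟩
  · have hdu : d = d * u := by
      calc d = d * 1 := by rw [mul_one]
        _ = d * (c + u) := by rw [hcu]
        _ = d * c + d * u := by rw [mul_add]
        _ = d * u := by rw [hd3, zero_add]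
    rw [hdu]
    exact hdown (d * u) u (le_mul_right hCP hG d u) hu
  · intro x hx
    have hxd : x = x * d := by
      calc x = x * 1 := by rw [mul_one]
        _ = x * (c + d) := by rw [hd1]
        _ = x * c + x * d := by rw [mul_add]
        _ = x * d := by rw [hPc x hx, zero_add]
    rw [hxd]
    exact le_mul_right hCP hG x d


end Fin
end MainIdem

theorem finite_of_princ {B : Type u} [BooleanAlgebra B]
    (princ : ∀ P : B → Prop, P ⊥ → (∀ x y : B, x ≤ y → P y → P x) →
      (∀ x y : B, P x → P y → P (x ⊔ y)) → ∃ M, P M ∧ ∀ x, P x → x ≤ M) :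
    Finite B := by
  classical
  -- no strictly descending sequences
  have nodesc : ∀ f : ℕ → B, (∀ n, f (n + 1) < f n) → False := by
    intro f hf
    have hanti : ∀ k l : ℕ, k ≤ l → f l ≤ f k := by
      intro k l hkl
      induction l with
      | zero => rw [Nat.le_zero.mp hkl]
      | succ m ih =>
        rcases Nat.lt_or_ge k (m + 1) with h | h
        · exact le_trans (hf m).le (ih (Nat.lt_succ_iff.mp h))
        · rw [Nat.le_antisymm hkl h]
    obtain ⟨M, hM, hub⟩ := princ (fun x => ∃ n, x ≤ (f n)ᶜ)
      ⟨0, bot_le⟩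
      (fun x y hxy ⟨n, hn⟩ => ⟨n, le_trans hxy hn⟩)
      (by
        rintro x y ⟨n, hn⟩ ⟨m, hm⟩
        refine ⟨max n m, sup_le ?_ ?_⟩
        · exact le_trans hn (compl_le_compl (hanti n (max n m) (le_max_left n m)))
        · exact le_trans hm (compl_le_compl (hanti m (max n m) (le_max_right n m))))
    obtain ⟨N, hN⟩ := hM
    have h1 : (f (N + 1))ᶜ ≤ (f N)ᶜ := le_trans (hub _ ⟨N + 1, le_refl _⟩) hN
    have h2 : f N ≤ f (N + 1) := compl_le_compl_iff_le.mp h1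
    exact absurd (lt_of_lt_of_le (hf N) h2) (lt_irrefl _)
  have wf : WellFounded ((· < ·) : B → B → Prop) := by
    rw [RelEmbedding.wellFounded_iff_isEmpty]
    constructor
    intro emb
    exact nodesc (fun n => emb n) (fun n => emb.map_rel_iff.mpr (Nat.lt_succ_self n))
  -- atomicity
  have hatomic : ∀ b : B, b ≠ ⊥ → ∃ a : B, IsAtom a ∧ a ≤ b := by
    intro b hb
    obtain ⟨a, ⟨ha1, ha2⟩, hmin⟩ :=
      wf.has_min {y : B | ⊥ < y ∧ y ≤ b} ⟨b, bot_lt_iff_ne_bot.mpr hb, le_refl b⟩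
    refine ⟨a, ⟨ne_of_gt ha1, ?_⟩, ha2⟩
    intro c hc
    by_contra hcne
    exact hmin c ⟨bot_lt_iff_ne_bot.mpr hcne, le_trans hc.le ha2⟩ hc
  -- finitely many atoms
  obtain ⟨M, ⟨F₀, hF₀, hMle⟩, hub⟩ := princ
    (fun x => ∃ F : Finset B, (∀ t ∈ F, IsAtom t) ∧ x ≤ F.sup id)
    ⟨∅, by simp⟩
    (fun x y hxy ⟨F, hF, hle⟩ => ⟨F, hF, le_trans hxy hle⟩)
    (by
      rintro x y ⟨F, hF, hle⟩ ⟨G, hG', hle'⟩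
      refine ⟨F ∪ G, ?_, ?_⟩
      · intro t ht
        rcases Finset.mem_union.mp ht with h | h
        · exact hF t h
        · exact hG' t h
      · rw [Finset.sup_union]
        exact sup_le (le_trans hle le_sup_left) (le_trans hle' le_sup_right))
  have hsub : {a : B | IsAtom a} ⊆ ↑F₀ := by
    intro a ha
    have haM : a ≤ F₀.sup id := by
      refine le_trans (hub a ⟨{a}, ?_, ?_⟩) hMle
      · intro t ht; rwa [Finset.mem_singleton.mp ht]
      · simp
    have h1 : a = F₀.sup (fun t => a ⊓ id t) := by
      rw [← Finset.sup_inf_distrib_left, inf_eq_left.mpr haM]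
    have h2 : ∃ t ∈ F₀, a ⊓ t ≠ ⊥ := by
      by_contra hc
      push_neg at hc
      have : F₀.sup (fun t => a ⊓ id t) = ⊥ :=
        (Finset.sup_eq_bot_iff _ _).mpr (fun s hs => hc s hs)
      exact ha.1 (h1.trans this)
    obtain ⟨t, htF, hat⟩ := h2
    have hat' : a ⊓ t = a := by
      rcases lt_or_eq_of_le (inf_le_left : a ⊓ t ≤ a) with h | h
      · exact absurd (ha.2 _ h) hat
      · exact h
    have hta : a ≤ t := inf_eq_left.mp hat'
    have : a = t := by
      rcases lt_or_eq_of_le hta with h | h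
      · exact absurd ((hF₀ t htF).2 _ h) ha.1
      · exact h
    rw [this]; exact htF
  have hAfin : {a : B | IsAtom a}.Finite := Set.Finite.subset F₀.finite_toSet hsub
  haveI : Finite {a : B // IsAtom a} := hAfin.to_subtype
  -- injection into sets of atoms
  set F : B → Set {a : B // IsAtom a} := fun x => {a | (a : B) ≤ x} with hF
  have hkey : ∀ x y : B, F x ⊆ F y → x ≤ y := by
    intro x y hxy
    have hcompl : x ⊓ yᶜ = ⊥ := by
      by_contra hne
      obtain ⟨a, ha, hax⟩ := hatomic _ hne
      have h1 : a ≤ x := le_trans hax inf_le_left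
      have h2 : a ≤ yᶜ := le_trans hax inf_le_right
      have h3 : (⟨a, ha⟩ : {a : B // IsAtom a}) ∈ F x := h1
      have h4 : a ≤ y := hxy h3
      have h5 : a ≤ y ⊓ yᶜ := le_inf h4 h2
      rw [inf_compl_eq_bot] at h5
      exact ha.1 (le_bot_iff.mp h5)
    calc x = x ⊓ (y ⊔ yᶜ) := by rw [sup_compl_eq_top, inf_top_eq]
      _ = (x ⊓ y) ⊔ (x ⊓ yᶜ) := inf_sup_left x y yᶜ
      _ = x ⊓ y := by rw [hcompl, sup_bot_eq]
      _ ≤ y := inf_le_right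
  have hinj : Function.Injective F := by
    intro x y hxy
    exact le_antisymm (hkey x y (le_of_eq hxy)) (hkey y x (le_of_eq hxy.symm))
  exact Finite.of_injective F hinj


theorem backward {S : Type u} [Semiring S]
    (h : IsFiniteBooleanAlgebraSemiring S) : IsLeftCPSemiring S := by
  classical
  obtain ⟨hfin, ba, hsup, hinf⟩ := h
  letI : BooleanAlgebra S := ba
  letI : Fintype S := Fintype.ofFinite S
  intro M _ _ hcyc
  obtain ⟨m, hspan⟩ := hcyc
  -- basic bridges
  have h0bot : (0 : S) = ⊥ := by
    refine le_antisymm ?_ bot_le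
    have : (0 : S) ⊔ ⊥ = ⊥ := by rw [← hsup, zero_add]
    exact sup_eq_right.mp this
  have hS_addidem : ∀ a : S, a + a = a := by
    intro a; rw [hsup, sup_idem]
  have h1top : (1 : S) = ⊤ := by
    refine le_antisymm le_top ?_
    calc (⊤ : S) = ⊤ ⊓ 1 := by rw [← hinf ⊤ 1, mul_one]
      _ ≤ 1 := inf_le_right
  have hle_of_add : ∀ {a b : S}, a + b = b → a ≤ b := by
    intro a b hab; exact sup_eq_right.mp (by rw [← hsup, hab])
  have hadd_of_le : ∀ {a b : S}, a ≤ b → a + b = b := by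
    intro a b hab; rw [hsup]; exact sup_eq_right.mpr hab
  -- M order facts
  have leM_refl : ∀ x : M, x + x = x := by
    intro x
    have h11 : (1 : S) + 1 = 1 := by rw [hsup, sup_idem]
    calc x + x = (1 : S) • x + (1 : S) • x := by rw [one_smul]
      _ = ((1 : S) + 1) • x := by rw [add_smul]
      _ = x := by rw [h11, one_smul]
  have smul_monoS : ∀ {a b : S} (x : M), a ≤ b → a • x + b • x = b • x := by
    intro a b x hab
    have : a ⊔ b = b := sup_eq_right.mpr hab
    calc a • x + b • x = (a ⊔ b) • x := by rw [← hsup, add_smul]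
      _ = b • x := by rw [this]
  have smul_monoM : ∀ (a : S) {x y : M}, x + y = y → a • x + a • y = a • y := by
    intro a x y hxy
    rw [← smul_add, hxy]
  have hsmul_inf : ∀ (a b : S) (x : M), (a ⊓ b) • x = a • (b • x) := by
    intro a b x; rw [← hinf, mul_smul]
  have hsmul_bot : ∀ x : M, (⊥ : S) • x = 0 := by
    intro x; rw [← h0bot, zero_smul]
  -- the projection
  set π : S → M := fun a => a • m with hπ
  have hπsurj : ∀ x : M, ∃ a : S, a • m = x := by
    intro x
    have : x ∈ Submodule.span S {m} := by rw [hspan]; trivial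
    exact Submodule.mem_span_singleton.mp this
  -- sums
  have sum_le_S : ∀ (F : Finset S) (c : S), (∀ b ∈ F, b ≤ c) → F.sum id ≤ c := by
    intro F c hF
    induction F using Finset.induction_on with
    | empty => rw [Finset.sum_empty, h0bot]; exact bot_le
    | insert _ _ hnotmem ih =>
      rename_i a F'
      rw [Finset.sum_insert hnotmem, hsup]
      exact sup_le (hF a (Finset.mem_insert_self a F'))
        (ih fun b hb => hF b (Finset.mem_insert_of_mem hb))
  have sum_le_M : ∀ (F : Finset S) (x : M), (∀ b ∈ F, b • m + x = x) → (F.sum id) • m + x = x := by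
    intro F x hF
    induction F using Finset.induction_on with
    | empty => rw [Finset.sum_empty, zero_smul, zero_add]
    | insert _ _ hnotmem ih =>
      rename_i a F'
      rw [Finset.sum_insert hnotmem]
      show (a + F'.sum id) • m + x = x
      rw [add_smul, add_assoc, ih fun b hb => hF b (Finset.mem_insert_of_mem hb)]
      exact hF a (Finset.mem_insert_self a F')
  have mem_le_sum : ∀ (F : Finset S) (b : S), b ∈ F → b ≤ F.sum id := by
    intro F b hb
    apply hle_of_add
    have h1 : b + (F.erase b).sum id = F.sum id := Finset.add_sum_erase F id hb
    rw [← h1, ← add_assoc, hS_addidem b]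
  -- g0
  set g0 : M → S := fun x => (Finset.univ.filter (fun b : S => b • m + x = x)).sum id with hg0
  have hg0_le : ∀ (x : M) (b : S), b • m + x = x → b ≤ g0 x := by
    intro x b hb
    exact mem_le_sum _ b (Finset.mem_filter.mpr ⟨Finset.mem_univ b, hb⟩)
  have hg0_spec : ∀ x : M, (g0 x) • m + x = x := by
    intro x
    exact sum_le_M _ x (fun b hb => (Finset.mem_filter.mp hb).2)
  have hπg0 : ∀ x : M, (g0 x) • m = x := by
    intro x
    obtain ⟨a, ha⟩ := hπsurj x
    have ha' : a • m + x = x := by rw [ha]; exact leM_refl x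
    have h1 : a ≤ g0 x := hg0_le x a ha'
    have h2 : x + (g0 x) • m = (g0 x) • m := by
      calc x + (g0 x) • m = a • m + (g0 x) • m := by rw [ha]
        _ = (g0 x) • m := smul_monoS m h1
    calc (g0 x) • m = x + (g0 x) • m := h2.symm
      _ = ((g0 x) • m + x) := by rw [add_comm]
      _ = x := hg0_spec x
  -- kernel
  set k : S := g0 0 with hk
  have hk_smul : k • m = 0 := by
    have := hπg0 (0 : M); rwa [← hk] at this
  have hsmul_zero_le_k : ∀ b : S, b • m = 0 → b ≤ k := by
    intro b hb
    exact hg0_le 0 b (by rw [hb, zero_add])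
  have hle_k_smul : ∀ b : S, b ≤ k → b • m = 0 := by
    intro b hb
    have h1 : b • m + k • m = k • m := smul_monoS m hb
    rw [hk_smul, add_zero] at h1
    exact h1
  -- the section
  set g : M → S := fun x => g0 x ⊓ kᶜ with hg
  have hπg : ∀ x : M, (g x) • m = x := by
    intro x
    have hdec : g0 x = (g0 x ⊓ kᶜ) ⊔ (g0 x ⊓ k) := by
      rw [← inf_sup_left, compl_sup_eq_top, inf_top_eq]
    have h2 : (g0 x ⊓ k) • m = 0 := hle_k_smul _ inf_le_right
    calc (g x) • m = (g x) • m + 0 := by rw [add_zero]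
      _ = (g0 x ⊓ kᶜ) • m + (g0 x ⊓ k) • m := by rw [h2]
      _ = ((g0 x ⊓ kᶜ) ⊔ (g0 x ⊓ k)) • m := by rw [← hsup, add_smul]
      _ = (g0 x) • m := by rw [← hdec]
      _ = x := hπg0 x
  -- monotonicity of g0
  have hg0_mono : ∀ {x y : M}, x + y = y → g0 x ≤ g0 y := by
    intro x y hxy
    apply sum_le_S
    intro b hb
    have hbx : b • m + x = x := (Finset.mem_filter.mp hb).2
    have : b • m + y = y := by
      calc b • m + y = b • m + (x + y) := by rw [hxy]
        _ = (b • m + x) + y := by rw [add_assoc]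
        _ = x + y := by rw [hbx]
        _ = y := hxy
    exact hg0_le y b this
  have hsum_inf : ∀ F : Finset S, F.sum id ⊓ kᶜ = F.sum (fun b => b ⊓ kᶜ) := by
    intro F
    calc F.sum id ⊓ kᶜ = F.sum id * kᶜ := (hinf _ _).symm
      _ = ∑ b ∈ F, b * kᶜ := Finset.sum_mul _ _ _
      _ = ∑ b ∈ F, (b ⊓ kᶜ) := Finset.sum_congr rfl (fun b _ => hinf b kᶜ)
  have sum_le_S' : ∀ (F : Finset S) (f : S → S) (c : S), (∀ b ∈ F, f b ≤ c) → F.sum f ≤ c := by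
    intro F f c hF
    induction F using Finset.induction_on with
    | empty => rw [Finset.sum_empty, h0bot]; exact bot_le
    | insert _ _ hnotmem ih =>
      rename_i a F'
      rw [Finset.sum_insert hnotmem, hsup]
      exact sup_le (hF a (Finset.mem_insert_self a F'))
        (ih fun b hb => hF b (Finset.mem_insert_of_mem hb))
  -- key decomposition for additivity
  have hadd_key : ∀ (x y : M) (b : S), b • m + (x + y) = x + y → b ⊓ kᶜ ≤ g0 x ⊔ g0 y := by
    intro x y b hb
    obtain ⟨u, hu⟩ := hπsurj x
    obtain ⟨v, hv⟩ := hπsurj y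
    set c' : S := b ⊓ uᶜ ⊓ vᶜ with hc'
    have hc'b : c' ≤ b := le_trans inf_le_left inf_le_left
    have hc'u : c' ≤ uᶜ := le_trans inf_le_left inf_le_right
    have hc'v : c' ≤ vᶜ := inf_le_right
    have hc'm : c' • m = 0 := by
      have e1 : c' ⊓ b = c' := inf_eq_left.mpr hc'b
      have e2 : c' • m = c' • (b • m) := by rw [← hsmul_inf, e1]
      have e3 : c' ⊓ u = ⊥ := le_bot_iff.mp (le_trans (inf_le_inf_right u hc'u) (le_of_eq compl_inf_eq_bot))
      have e4 : c' ⊓ v = ⊥ := le_bot_iff.mp (le_trans (inf_le_inf_right v hc'v) (le_of_eq compl_inf_eq_bot))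
      have e5 : c' • (x + y) = 0 := by
        calc c' • (x + y) = c' • x + c' • y := smul_add _ _ _
          _ = c' • (u • m) + c' • (v • m) := by rw [← hu, ← hv]
          _ = (c' ⊓ u) • m + (c' ⊓ v) • m := by rw [hsmul_inf c' u m, hsmul_inf c' v m]
          _ = 0 := by rw [e3, e4, hsmul_bot]; exact add_zero 0
      have e6 := smul_monoM c' hb
      rw [e5, add_zero] at e6
      rw [e2, e6]
    have hc'k : c' ≤ k := hsmul_zero_le_k c' hc'm
    have hbu : b ⊓ u ≤ g0 x := by
      apply hg0_le
      have : (b ⊓ u) • m + u • m = u • m := smul_monoS m inf_le_right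
      rw [hu] at this
      exact this
    have hbv : (b ⊓ uᶜ) ⊓ v ≤ g0 y := by
      apply hg0_le
      have : ((b ⊓ uᶜ) ⊓ v) • m + v • m = v • m := smul_monoS m inf_le_right
      rw [hv] at this
      exact this
    have hdecomp : b = (b ⊓ u) ⊔ (((b ⊓ uᶜ) ⊓ v) ⊔ c') := by
      calc b = b ⊓ (u ⊔ uᶜ) := by rw [sup_compl_eq_top, inf_top_eq]
        _ = (b ⊓ u) ⊔ (b ⊓ uᶜ) := inf_sup_left b u uᶜ
        _ = (b ⊓ u) ⊔ ((b ⊓ uᶜ) ⊓ (v ⊔ vᶜ)) := by rw [sup_compl_eq_top, inf_top_eq]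
        _ = (b ⊓ u) ⊔ (((b ⊓ uᶜ) ⊓ v) ⊔ ((b ⊓ uᶜ) ⊓ vᶜ)) := by rw [inf_sup_left]
        _ = (b ⊓ u) ⊔ (((b ⊓ uᶜ) ⊓ v) ⊔ c') := by rw [hc', inf_assoc]
    have h1 : b ⊓ kᶜ ≤ ((b ⊓ u) ⊔ (((b ⊓ uᶜ) ⊓ v) ⊔ c')) ⊓ kᶜ := by
      rw [← hdecomp]
    rw [inf_sup_right, inf_sup_right] at h1
    refine le_trans h1 (sup_le ?_ (sup_le ?_ ?_))
    · exact le_trans inf_le_left (le_trans hbu le_sup_left)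
    · exact le_trans inf_le_left (le_trans hbv le_sup_right)
    · have : c' ⊓ kᶜ ≤ ⊥ := le_trans (inf_le_inf_right kᶜ hc'k) (le_of_eq inf_compl_eq_bot)
      exact le_trans this bot_le
  -- additivity of g
  have hgadd : ∀ x y : M, g (x + y) = g x + g y := by
    intro x y
    rw [hsup]
    refine le_antisymm ?_ (sup_le ?_ ?_)
    · have h1 : g (x + y) = ∑ b ∈ Finset.univ.filter (fun b : S => b • m + (x + y) = x + y), (b ⊓ kᶜ) := by
        rw [hg]
        exact hsum_inf _
      have h2 : g (x + y) ≤ g0 x ⊔ g0 y := by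
        rw [h1]
        exact sum_le_S' _ _ _ (fun b hb => hadd_key x y b (Finset.mem_filter.mp hb).2)
      have h3 : (g x) ⊔ (g y) = (g0 x ⊔ g0 y) ⊓ kᶜ := by
        rw [hg]; exact (inf_sup_right _ _ _).symm
      rw [h3]
      exact le_inf h2 inf_le_right
    · have : x + (x + y) = x + y := by rw [← add_assoc, leM_refl x]
      exact inf_le_inf_right kᶜ (hg0_mono this)
    · have : y + (x + y) = x + y := by
        calc y + (x + y) = x + (y + y) := by abel
          _ = x + y := by rw [leM_refl y]
      exact inf_le_inf_right kᶜ (hg0_mono this)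
  -- scalar compatibility
  have hgsmul : ∀ (a : S) (x : M), g (a • x) = a * g x := by
    intro a x
    rw [hinf]
    refine le_antisymm ?_ ?_
    · have h1 : g (a • x) = ∑ b ∈ Finset.univ.filter (fun b : S => b • m + a • x = a • x), (b ⊓ kᶜ) := by
        rw [hg]; exact hsum_inf _
      rw [h1]
      apply sum_le_S'
      intro b hb
      have hbm : b • m + a • x = a • x := (Finset.mem_filter.mp hb).2
      have hbk : b ⊓ aᶜ ≤ k := by
        apply hsmul_zero_le_k
        have e1 : (b ⊓ aᶜ) • m = aᶜ • (b • m) := by rw [inf_comm b aᶜ, hsmul_inf]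
        have e2 : aᶜ • (a • x) = 0 := by
          rw [← hsmul_inf, compl_inf_eq_bot, hsmul_bot]
        have e3 := smul_monoM aᶜ hbm
        rw [e2, add_zero] at e3
        rw [e1, e3]
      have hbg0 : b ≤ g0 x := by
        apply hg0_le
        have hax : a • x + x = x := by
          have := smul_monoS (x) (le_top : a ≤ ⊤)
          rwa [← h1top, one_smul] at this
        calc b • m + x = b • m + (a • x + x) := by rw [hax]
          _ = (b • m + a • x) + x := by rw [add_assoc]
          _ = a • x + x := by rw [hbm]
          _ = x := hax
      have hba : b ⊓ kᶜ ≤ a := by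
        have hds : b ⊓ kᶜ = ((b ⊓ kᶜ) ⊓ a) ⊔ ((b ⊓ kᶜ) ⊓ aᶜ) := by
          rw [← inf_sup_left, sup_compl_eq_top, inf_top_eq]
        have h2 : (b ⊓ kᶜ) ⊓ aᶜ ≤ ⊥ := by
          calc (b ⊓ kᶜ) ⊓ aᶜ = (b ⊓ aᶜ) ⊓ kᶜ := inf_right_comm b kᶜ aᶜ
            _ ≤ k ⊓ kᶜ := inf_le_inf_right kᶜ hbk
            _ = ⊥ := inf_compl_eq_bot
        rw [hds]
        exact sup_le inf_le_right (le_trans h2 bot_le)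
      exact le_inf hba (le_inf (le_trans inf_le_left hbg0) inf_le_right)
    · refine le_inf ?_ (le_trans inf_le_right inf_le_right)
      apply hg0_le
      have : (a ⊓ g x) • m = a • x := by
        rw [hsmul_inf, hπg]
      rw [this]
      exact leM_refl _
  -- assemble the linear section
  let gLin : M →ₗ[S] S :=
    { toFun := g
      map_add' := hgadd
      map_smul' := fun a x => by
        show g (a • x) = a • g x
        rw [smul_eq_mul]
        exact hgsmul a x }
  let πLin : S →ₗ[S] M := LinearMap.toSpanSingleton S M m
  have hsplit : πLin ∘ₗ gLin = LinearMap.id := by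
    apply LinearMap.ext
    intro x
    show πLin (g x) = x
    rw [LinearMap.toSpanSingleton_apply]
    exact hπg x
  exact Module.Projective.of_split gLin πLin hsplit

end CPaux13

/-- a left Gelfand semiring is a left CP-semiring iff it is (as a
semiring) a finite Boolean algebra. -/
theorem leftGelfand_isLeftCPSemiring_iff_finiteBooleanAlgebra
    (S : Type u) [Semiring S]
    (hG : ∀ s : S, ∃ t : S, t * (1 + s) = 1) :
    IsLeftCPSemiring S ↔ IsFiniteBooleanAlgebraSemiring S := by
  constructor
  · intro hCP
    letI : BooleanAlgebra S := CPaux13.mkBA hCP hG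
    refine ⟨CPaux13.finite_of_princ ?_, ⟨CPaux13.mkBA hCP hG, fun a b => rfl, fun a b => rfl⟩⟩
    exact fun P h0 hdown hadd => CPaux13.princ hCP hG P h0 hdown hadd
  · exact CPaux13.backward
end

section
/- Let S be a nontrivial, additively idempotent (s + s = s for all s), anti-bounded semiring. Then S is a left CP-semiring if and only if S is isomorphic to the Boolean semifield B, or S is isomorphic to the three-element semiring B₃. -/
universe u

/-- `S` is (isomorphic to) the Boolean semifield `B = {0, 1}` with `1 + 1 = 1`. -/
def IsBooleanSemifield (S : Type u) [Semiring S] : Prop :=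
  (∀ x : S, x = 0 ∨ x = 1) ∧ (0 : S) ≠ 1 ∧ (1 : S) + 1 = 1

/-- `S` is (isomorphic to) the three-element semiring `B₃` on the chain
`0 < 1 < 2` with `x + y = x ∨ y` and `x * y = 0` if `x = 0` or `y = 0`, and
`x * y = x ∨ y` otherwise. -/
def IsBThree (S : Type u) [Semiring S] : Prop :=
  (0 : S) ≠ 1 ∧ ∃ t : S, t ≠ 0 ∧ t ≠ 1 ∧ (∀ x : S, x = 0 ∨ x = 1 ∨ x = t) ∧
    (1 : S) + 1 = 1 ∧ (1 : S) + t = t ∧ t + t = t ∧ t * t = t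

/-! Over such a semiring every nonzero `s` satisfies `1 + s = s`, so left multiplication by a
nonzero element is inflationary and, for each `c`, collapsing the elements above `c` is a left
congruence. A cyclic module `S ⧸ ρ` is projective exactly when some `e` congruent to `1` makes
`u ↦ u * e` constant on `ρ`-classes. For `c = 1` this yields an element `t` absorbing every
nonzero element, and for `c ∉ {0, 1}` it forces `c = t`. Conversely, over `B` and `B₃` the map
`s ↦ s • m` on a nonzero generator is injective or only identifies the nonzero elements, and
`e = 1` resp. `e = t` works. -/

theorem Module.projective_iff_exists_of_span_singleton_eq_top {S M : Type*} [Semiring S]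
    [AddCommMonoid M] [Module S M] {m : M} (hm : Submodule.span S {m} = ⊤) :
    Module.Projective S M ↔ ∃ e : S, e • m = m ∧ ∀ s s' : S, s • m = s' • m → s * e = s' * e := by
  constructor
  · intro _
    obtain ⟨g, hg⟩ := (LinearMap.toSpanSingleton S M m).exists_rightInverse_of_surjective
      (by rw [← LinearMap.span_singleton_eq_range, hm])
    have hgm : ∀ x, g x • m = x := fun x => LinearMap.congr_fun hg x
    refine ⟨g m, hgm m, fun s s' h => ?_⟩
    rw [← smul_eq_mul, ← smul_eq_mul, ← map_smul, ← map_smul, h]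
  · rintro ⟨e, hem, he⟩
    have hsurj : ∀ x : M, ∃ s : S, s • m = x := fun x =>
      Submodule.mem_span_singleton.1 (hm ▸ Submodule.mem_top)
    choose coeff hcoeff using hsurj
    have hcoeff_mul : ∀ s : S, coeff (s • m) * e = s * e := fun s => he _ _ (hcoeff _)
    let g : M →ₗ[S] S :=
      { toFun := fun x => coeff x * e
        map_add' := fun x y => by
          rw [← hcoeff x, ← hcoeff y, ← add_smul, hcoeff_mul, hcoeff_mul, hcoeff_mul, add_mul]
        map_smul' := fun r x => by
          rw [← hcoeff x, smul_smul, hcoeff_mul, hcoeff_mul, RingHom.id_apply, smul_eq_mul,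
            mul_assoc] }
    refine .of_split g (LinearMap.toSpanSingleton S M m) (LinearMap.ext fun x => ?_)
    change (coeff x * e) • m = x
    rw [mul_smul, hem, hcoeff]

theorem IsLeftCPSemiring.exists_mul_eq_of_moduleCon {S : Type u} [Semiring S]
    (hCP : IsLeftCPSemiring S) (ρ : ModuleCon S S) :
    ∃ e : S, ρ.toAddCon e 1 ∧ ∀ u v : S, ρ.toAddCon u v → u * e = v * e := by
  let mk : S → ρ.Quotient := Quotient.mk _
  have hsmul : ∀ s : S, s • mk 1 = mk s := fun s => congrArg mk (mul_one s)
  have hspan : Submodule.span S {mk 1} = ⊤ := by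
    refine Submodule.eq_top_iff'.2 fun x => Submodule.mem_span_singleton.2 ?_
    induction x using Quotient.inductionOn with | h s => exact ⟨s, hsmul s⟩
  obtain ⟨e, he1, he⟩ := (Module.projective_iff_exists_of_span_singleton_eq_top hspan).1
    (hCP _ ⟨_, hspan⟩)
  refine ⟨e, Quotient.exact ((hsmul e).symm.trans he1), fun u v huv => he u v ?_⟩
  rw [hsmul, hsmul]
  exact Quotient.sound huv

theorem add_mul_eq_mul_of_add_eq {S : Type*} [Semiring S] {c x s : S} (hcx : c + x = x)
    (hs : 1 + s = s) : c + s * x = s * x := by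
  have hx : x + s * x = s * x := by rw [← one_add_mul, hs]
  rw [← hx, ← add_assoc, hcx]

/-- With idempotent addition, `c + x = x` says `c ≤ x`. -/
def collapseAboveCon {S : Type*} [Semiring S] (hone : ∀ s : S, s ≠ 0 → 1 + s = s) (c : S) :
    ModuleCon S S where
  r x y := x = y ∨ (c + x = x ∧ c + y = y)
  iseqv :=
    { refl _ := .inl rfl
      symm := by rintro x y (rfl | ⟨hx, hy⟩) <;> simp_all
      trans := by rintro x y z (rfl | ⟨hx, hy⟩) (rfl | ⟨hy', hz⟩) <;> simp_all }
  add' := by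
    rintro w x y z (rfl | ⟨hw, hx⟩) (rfl | ⟨hy, hz⟩)
    · exact .inl rfl
    · exact .inr ⟨by rw [add_left_comm, hy], by rw [add_left_comm, hz]⟩
    · exact .inr ⟨by rw [← add_assoc, hw], by rw [← add_assoc, hx]⟩
    · exact .inr ⟨by rw [← add_assoc, hw], by rw [← add_assoc, hx]⟩
  smul s x y := by
    rintro (rfl | ⟨hx, hy⟩)
    · exact .inl rfl
    by_cases hs : s = 0
    · exact .inl (by simp [hs])
    · exact .inr ⟨add_mul_eq_mul_of_add_eq hx (hone s hs), add_mul_eq_mul_of_add_eq hy (hone s hs)⟩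

theorem IsLeftCPSemiring.isBooleanSemifield_or_isBThree {S : Type u} [Semiring S] [Nontrivial S]
    (hone : ∀ s : S, s ≠ 0 → 1 + s = s) (hCP : IsLeftCPSemiring S) :
    IsBooleanSemifield S ∨ IsBThree S := by
  have h11 : (1 : S) + 1 = 1 := hone 1 one_ne_zero
  have hidem : ∀ x : S, x + x = x := fun x => by
    simpa only [add_mul, one_mul] using congrArg (· * x) h11
  obtain ⟨t, ht_one, ht⟩ := hCP.exists_mul_eq_of_moduleCon (collapseAboveCon hone 1)
  have ht0 : t ≠ 0 := by
    rintro rfl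
    rcases ht_one with h | ⟨h, -⟩ <;> simp at h
  have habs : ∀ u : S, u ≠ 0 → u * t = t := fun u hu => by
    simpa using ht u 1 (.inr ⟨hone u hu, h11⟩)
  have hle : ∀ a : S, a + t = t := by
    intro a
    by_cases ha : a = 0
    · rw [ha, zero_add]
    calc a + t = a * (1 + t) := by rw [mul_add, mul_one, habs a ha]
      _ = t := by rw [hone t ht0, habs a ha]
  have hcl : ∀ x : S, x = 0 ∨ x = 1 ∨ x = t := by
    intro x
    by_contra! ⟨hx0, hx1, hxt⟩
    obtain ⟨e, he1, he⟩ := hCP.exists_mul_eq_of_moduleCon (collapseAboveCon hone x)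
    rcases he1 with rfl | ⟨-, hx1'⟩
    · exact hxt (by simpa using he x t (.inr ⟨hidem x, hle x⟩))
    · exact hx1 (by rw [← hone x hx0, add_comm, hx1'])
  by_cases ht1 : t = 1
  · exact .inl ⟨fun x => by simpa [ht1] using hcl x, zero_ne_one, h11⟩
  · exact .inr ⟨zero_ne_one, t, ht0, ht1, hcl, h11, hone t ht0, hidem t, habs t ht0⟩

theorem isLeftCPSemiring_of_forall_eq_zero_or_one_or {S : Type u} [Semiring S] (t : S)
    (hcl : ∀ x : S, x = 0 ∨ x = 1 ∨ x = t) (h1t : 1 + t = t) (htt : t * t = t) :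
    IsLeftCPSemiring S := by
  rintro M _ _ ⟨m, hm⟩
  rw [Module.projective_iff_exists_of_span_singleton_eq_top hm]
  by_cases hm0 : m = 0
  · exact ⟨0, by simp [hm0], by simp⟩
  by_cases htm : t • m = m
  · refine ⟨t, htm, fun s s' h => ?_⟩
    rcases hcl s with rfl | rfl | rfl <;> rcases hcl s' with rfl | rfl | rfl <;>
      simp [htm, htt, hm0, Ne.symm hm0] at h ⊢
  · have htm0 : t • m ≠ 0 := fun h => hm0 <| calc
      m = (1 : S) • m + t • m := by rw [h, add_zero, one_smul]
      _ = 0 := by rw [← add_smul, h1t, h]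
    refine ⟨1, one_smul _ _, fun s s' h => ?_⟩
    rcases hcl s with rfl | rfl | rfl <;> rcases hcl s' with rfl | rfl | rfl <;>
      simp [htm, htm0, hm0, Ne.symm htm, Ne.symm htm0, Ne.symm hm0] at h ⊢

theorem one_add_eq_self_of_ne_zero {S : Type*} [Semiring S] (hadd : ∀ s : S, s + s = s)
    (hab : ∀ a : S, (∃ b : S, a + b = 0) ∨ (∃ s : S, a = 1 + s)) {s : S} (hs : s ≠ 0) :
    1 + s = s := by
  rcases hab s with ⟨b, hb⟩ | ⟨r, rfl⟩
  · refine absurd ?_ hs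
    calc s = s + (s + b) := by rw [hb, add_zero]
      _ = 0 := by rw [← add_assoc, hadd, hb]
  · rw [← add_assoc, hadd]

/-- a nontrivial additively idempotent anti-bounded semiring is a
left CP-semiring iff it is isomorphic to `B` or to `B₃`. -/
theorem antibounded_addIdempotent_isLeftCPSemiring_iff
    (S : Type u) [Semiring S] [Nontrivial S]
    (hadd : ∀ s : S, s + s = s)
    (hab : ∀ a : S, (∃ b : S, a + b = 0) ∨ (∃ s : S, a = 1 + s)) :
    IsLeftCPSemiring S ↔ IsBooleanSemifield S ∨ IsBThree S := by
  refine ⟨IsLeftCPSemiring.isBooleanSemifield_or_isBThree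
    fun _ => one_add_eq_self_of_ne_zero hadd hab, ?_⟩
  rintro (⟨hcl, -, h11⟩ | ⟨-, t, -, -, hcl, -, h1t, -, htt⟩)
  · exact isLeftCPSemiring_of_forall_eq_zero_or_one_or 1 (by simpa using hcl) h11 (mul_one 1)
  · exact isLeftCPSemiring_of_forall_eq_zero_or_one_or t hcl h1t htt
end

section
/- Let S be a nontrivial anti-bounded semiring. The following are equivalent: (1) S is congruence-simple; (2) S is ideal-simple; (3) S is a simple ring (every element of S has an additive inverse and S is ideal-simple), or S is isomorphic to the Boolean semifield B. -/
/-!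
Under either simplicity notion, the additive units of `S` form a subtractive ideal
(`a + i ∈ I` and `i ∈ I` imply `a ∈ I`), hence are `0` or all of `S`; for congruences this goes
through the Bourne congruence `a ~ b ↔ ∃ i j ∈ I, a + i = b + j`, which is universal only if
`1 ∈ I` when `I` is subtractive. If every element is an additive unit, `S` is a ring, where ideals
and congruences determine each other. Otherwise `S` is zero-sum free, so by anti-boundedness every
nonzero element is `1 + s`; then `S` has no zero divisors and "being zero" is a congruence, whose
triviality gives `S ≅ B`. For ideals, instead, `2` is invertible, so `1 + u = 1` for some `u ≠ 0`;
this forces `1 + x = x` for every `x ≠ 0`, and an `a ≠ 0` with `u * a * v ≤ 1` is then squeezed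
to `1`.
-/

universe u

/-- A semiring is congruence-simple if it is nontrivial and its only semiring
congruences are the diagonal one and the universal one. -/
def IsCongruenceSimple (S : Type u) [Semiring S] : Prop :=
  Nontrivial S ∧ ∀ c : RingCon S, c = ⊥ ∨ c = ⊤

/-- A semiring is ideal-simple if it is nontrivial and its only two-sided ideals
(additive submonoids closed under left and right multiplication) are `0` and `S`. -/
def IsIdealSimple (S : Type u) [Semiring S] : Prop :=
  Nontrivial S ∧ ∀ I : AddSubmonoid S,
    (∀ a ∈ I, ∀ s : S, s * a ∈ I ∧ a * s ∈ I) → I = ⊥ ∨ I = ⊤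

variable {S : Type*} [Semiring S]

def AddSubmonoid.IsTwoSided (I : AddSubmonoid S) : Prop :=
  ∀ a ∈ I, ∀ s : S, s * a ∈ I ∧ a * s ∈ I

lemma AddSubmonoid.IsTwoSided.eq_top_of_one_mem {I : AddSubmonoid S} (hI : I.IsTwoSided)
    (h1 : (1 : S) ∈ I) : I = ⊤ :=
  (AddSubmonoid.eq_top_iff' I).mpr fun s => by simpa using (hI 1 h1 s).1

lemma RingCon.eq_top_of_one_zero (c : RingCon S) (h : c 1 0) : c = ⊤ := by
  have hall : ∀ x, c x 0 := fun x => by simpa using c.mul (c.refl x) h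
  exact eq_top_iff.mpr fun a b _ => c.trans (hall a) (c.symm (hall b))

namespace IsIdealSimple

lemma mem_of_ne_zero (h : IsIdealSimple S) {I : AddSubmonoid S} (hI : I.IsTwoSided) {a : S}
    (ha : a ∈ I) (ha0 : a ≠ 0) (x : S) : x ∈ I :=
  (h.2 I hI).elim (fun hbot => absurd ((AddSubmonoid.eq_bot_iff_forall I).mp hbot a ha) ha0)
    fun htop => htop ▸ AddSubmonoid.mem_top x

lemma exists_mul_eq_one_of_commute (h : IsIdealSimple S) {a : S} (ha : ∀ r, Commute a r)
    (ha0 : a ≠ 0) : ∃ s, a * s = 1 := by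
  have hI : (AddMonoidHom.mrange (AddMonoidHom.mulLeft a)).IsTwoSided := by
    rintro _ ⟨s, rfl⟩ r
    exact ⟨⟨r * s, by simp [← mul_assoc, (ha r).eq]⟩, ⟨s * r, by simp [mul_assoc]⟩⟩
  exact AddMonoidHom.mem_mrange.mp (h.mem_of_ne_zero hI ⟨1, mul_one a⟩ ha0 1)

lemma exists_one_add_eq_self (h : IsIdealSimple S) {u y : S} (hu : u + y = y) (hu0 : u ≠ 0) :
    ∃ y : S, 1 + y = y := by
  let K : AddSubmonoid S :=
    { carrier := {x | ∃ y, x + y = y}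
      zero_mem' := ⟨0, zero_add 0⟩
      add_mem' := by
        rintro a b ⟨y, hy⟩ ⟨z, hz⟩
        exact ⟨y + z, by rw [add_add_add_comm, hy, hz]⟩ }
  have hK : K.IsTwoSided := by
    rintro a ⟨y, hy⟩ s
    exact ⟨⟨s * y, by rw [← mul_add, hy]⟩, ⟨y * s, by rw [← add_mul, hy]⟩⟩
  exact h.mem_of_ne_zero hK ⟨y, hu⟩ hu0 1

lemma forall_ne_zero_of_upward_closed (h : IsIdealSimple S) {P : S → Prop}
    (hadd : ∀ x y, P x → P (x + y))
    (hmul : ∀ r x, r ≠ 0 → P x → P (r * x) ∧ P (x * r)) {a : S} (ha : P a) {x : S}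
    (hx : x ≠ 0) : P x := by
  obtain rfl | ha0 := eq_or_ne a 0
  · simpa using hadd 0 x ha
  let I : AddSubmonoid S :=
    { carrier := {x | x = 0 ∨ P x}
      zero_mem' := Or.inl rfl
      add_mem' := by
        rintro x y (rfl | hx) hy
        · simpa using hy
        · exact Or.inr (hadd x y hx) }
  have hI : I.IsTwoSided := by
    rintro x (rfl | hx) r
    · simp [I]
    obtain rfl | hr := eq_or_ne r 0
    · simp [I]
    exact ⟨Or.inr (hmul r x hr hx).1, Or.inr (hmul r x hr hx).2⟩
  exact (h.mem_of_ne_zero hI (Or.inr ha) ha0 x).resolve_left hx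

end IsIdealSimple

def RingCon.zeroClass (c : RingCon S) : AddSubmonoid S where
  carrier := {a | c a 0}
  zero_mem' := c.refl 0
  add_mem' {a b} ha hb := by simpa using c.add ha hb

@[simp]
lemma RingCon.mem_zeroClass {c : RingCon S} {a : S} : a ∈ c.zeroClass ↔ c a 0 := Iff.rfl

lemma RingCon.zeroClass_isTwoSided (c : RingCon S) : c.zeroClass.IsTwoSided := fun a ha s => by
  simp only [RingCon.mem_zeroClass] at ha ⊢
  exact ⟨by simpa using c.mul (c.refl s) ha, by simpa using c.mul ha (c.refl s)⟩

def AddSubmonoid.bourneCon (I : AddSubmonoid S) (hI : I.IsTwoSided) : RingCon S where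
  r a b := ∃ i ∈ I, ∃ j ∈ I, a + i = b + j
  iseqv := by
    refine ⟨fun a => ⟨0, I.zero_mem, 0, I.zero_mem, rfl⟩, ?_, ?_⟩
    · rintro a b ⟨i, hi, j, hj, hij⟩
      exact ⟨j, hj, i, hi, hij.symm⟩
    · rintro a b d ⟨i, hi, j, hj, h₁⟩ ⟨k, hk, l, hl, h₂⟩
      refine ⟨i + k, I.add_mem hi hk, l + j, I.add_mem hl hj, ?_⟩
      calc a + (i + k) = (a + i) + k := (add_assoc _ _ _).symm
        _ = (b + k) + j := by rw [h₁, add_right_comm]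
        _ = d + (l + j) := by rw [h₂, add_assoc]
  add' := by
    rintro a b x y ⟨i, hi, j, hj, h₁⟩ ⟨k, hk, l, hl, h₂⟩
    refine ⟨i + k, I.add_mem hi hk, j + l, I.add_mem hj hl, ?_⟩
    rw [add_add_add_comm, h₁, h₂, add_add_add_comm]
  mul' := by
    rintro a b x y ⟨i, hi, j, hj, h₁⟩ ⟨k, hk, l, hl, h₂⟩
    refine ⟨a * k + i * x + i * k,
      I.add_mem (I.add_mem (hI k hk a).1 (hI i hi x).2) (hI k hk i).1,
      b * l + j * y + j * l,
      I.add_mem (I.add_mem (hI l hl b).1 (hI j hj y).2) (hI l hl j).1, ?_⟩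
    calc a * x + (a * k + i * x + i * k) = (a + i) * (x + k) := by
          simp only [add_mul, mul_add]; abel
      _ = (b + j) * (y + l) := by rw [h₁, h₂]
      _ = b * y + (b * l + j * y + j * l) := by simp only [add_mul, mul_add]; abel

lemma IsCongruenceSimple.eq_bot_or_eq_top (h : IsCongruenceSimple S) {I : AddSubmonoid S}
    (hI : I.IsTwoSided) (hsub : ∀ a i, i ∈ I → a + i ∈ I → a ∈ I) : I = ⊥ ∨ I = ⊤ := by
  refine (h.2 (I.bourneCon hI)).imp (fun hbot => ?_) fun htop => ?_
  · refine (AddSubmonoid.eq_bot_iff_forall I).mpr fun a ha => ?_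
    have : I.bourneCon hI a 0 := ⟨0, I.zero_mem, a, ha, by rw [add_zero, zero_add]⟩
    rwa [hbot] at this
  · obtain ⟨i, hi, j, hj, hij⟩ : I.bourneCon hI 1 0 := htop ▸ trivial
    exact hI.eq_top_of_one_mem (hsub 1 i hi (by rw [hij, zero_add]; exact hj))

lemma isIdealSimple_of_isCongruenceSimple (hr : ∀ a : S, ∃ b, a + b = 0)
    (h : IsCongruenceSimple S) : IsIdealSimple S := by
  refine ⟨h.1, fun I hI => h.eq_bot_or_eq_top hI fun a i hi hai => ?_⟩
  obtain ⟨x, hx⟩ := hr 1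
  have ha : a = (a + i) + i * x := by rw [add_assoc, ← mul_one_add, hx, mul_zero, add_zero]
  exact ha ▸ I.add_mem hai (hI i hi x).2

lemma isCongruenceSimple_of_isIdealSimple (hr : ∀ a : S, ∃ b, a + b = 0)
    (h : IsIdealSimple S) : IsCongruenceSimple S := by
  refine ⟨h.1, fun c => ?_⟩
  refine (h.2 c.zeroClass c.zeroClass_isTwoSided).imp (fun hbot => ?_) fun htop => ?_
  · refine eq_bot_iff.mpr fun a b hab => ?_
    obtain ⟨b', hb'⟩ := hr b
    have hab' : a + b' = 0 := (AddSubmonoid.eq_bot_iff_forall _).mp hbot _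
      (by simpa [hb'] using c.add hab (c.refl b'))
    calc a = a + (b + b') := by rw [hb', add_zero]
      _ = b + (a + b') := add_left_comm _ _ _
      _ = b := by rw [hab', add_zero]
  · exact c.eq_top_of_one_zero ((AddSubmonoid.eq_top_iff' _).mp htop 1)

namespace IsBooleanSemifield

lemma isCongruenceSimple (hB : IsBooleanSemifield S) : IsCongruenceSimple S := by
  obtain ⟨hx, h01, -⟩ := hB
  refine ⟨nontrivial_of_ne 0 1 h01, fun c => ?_⟩
  by_cases h : c 1 0
  · exact Or.inr (c.eq_top_of_one_zero h)
  refine Or.inl (eq_bot_iff.mpr fun a b hab => ?_)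
  rcases hx a with rfl | rfl <;> rcases hx b with rfl | rfl
  exacts [rfl, absurd (c.symm hab) h, absurd hab h, rfl]

lemma isIdealSimple (hB : IsBooleanSemifield S) : IsIdealSimple S := by
  obtain ⟨hx, h01, -⟩ := hB
  refine ⟨nontrivial_of_ne 0 1 h01, fun I hI => ?_⟩
  by_cases h1 : (1 : S) ∈ I
  · exact Or.inr (AddSubmonoid.IsTwoSided.eq_top_of_one_mem hI h1)
  refine Or.inl ((AddSubmonoid.eq_bot_iff_forall I).mpr fun x hxI => ?_)
  exact (hx x).resolve_right (by rintro rfl; exact h1 hxI)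

end IsBooleanSemifield

lemma add_eq_zero_iff_of_zeroSumFree (hzs : ∀ a b : S, a + b = 0 → a = 0) {a b : S} :
    a + b = 0 ↔ a = 0 ∧ b = 0 :=
  ⟨fun h => ⟨hzs a b h, hzs b a (by rwa [add_comm])⟩, fun ⟨ha, hb⟩ => by rw [ha, hb, add_zero]⟩

lemma exists_eq_one_add_of_ne_zero (hzs : ∀ a b : S, a + b = 0 → a = 0)
    (hab : ∀ a : S, (∃ b, a + b = 0) ∨ ∃ s, a = 1 + s) {a : S} (ha : a ≠ 0) :
    ∃ s, a = 1 + s :=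
  (hab a).resolve_left fun ⟨b, hb⟩ => ha (hzs a b hb)

lemma noZeroDivisors_of_zeroSumFree (hzs : ∀ a b : S, a + b = 0 → a = 0)
    (hab : ∀ a : S, (∃ b, a + b = 0) ∨ ∃ s, a = 1 + s) : NoZeroDivisors S where
  eq_zero_or_eq_zero_of_mul_eq_zero {a b} h := by
    by_contra! hne
    obtain ⟨w, rfl⟩ := exists_eq_one_add_of_ne_zero hzs hab hne.2
    exact hne.1 (hzs a (a * w) (by rwa [mul_one_add] at h))

/-- The kernel of the semiring map to the Boolean semifield sending every nonzero element to `1`. -/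
def zeroOrNonzeroCon [NoZeroDivisors S] (hzs : ∀ a b : S, a + b = 0 → a = 0) : RingCon S where
  r a b := (a = 0 ↔ b = 0)
  iseqv := ⟨fun _ => Iff.rfl, Iff.symm, Iff.trans⟩
  add' h₁ h₂ := by simp only [add_eq_zero_iff_of_zeroSumFree hzs, h₁, h₂]
  mul' h₁ h₂ := by simp only [mul_eq_zero, h₁, h₂]

lemma IsCongruenceSimple.isBooleanSemifield [NoZeroDivisors S] (h : IsCongruenceSimple S)
    (hzs : ∀ a b : S, a + b = 0 → a = 0) : IsBooleanSemifield S := by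
  have := h.1
  have hbot : zeroOrNonzeroCon hzs = ⊥ := (h.2 _).resolve_right fun htop => by
    have : zeroOrNonzeroCon hzs 0 1 := htop ▸ trivial
    exact one_ne_zero (this.mp rfl)
  have heq : ∀ x : S, x ≠ 0 → x = 1 := fun x hx => by
    have : zeroOrNonzeroCon hzs x 1 := iff_of_false hx one_ne_zero
    rwa [hbot] at this
  exact ⟨fun x => (eq_or_ne x 0).imp_right (heq x), zero_ne_one,
    heq _ fun h2 => one_ne_zero (hzs 1 1 h2)⟩

lemma IsIdealSimple.eq_one_of_ne_zero [NoZeroDivisors S] (h : IsIdealSimple S)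
    (hle : ∀ x : S, x ≠ 0 → 1 + x = x) {a : S} (ha : a ≠ 0) : a = 1 := by
  have := h.1
  have haa : a + a = a := by rw [← mul_one a, ← mul_add, hle 1 one_ne_zero]
  obtain ⟨u, v, huv0, huv⟩ : ∃ u v, u * a * v ≠ 0 ∧ u * a * v + 1 = 1 := by
    refine h.forall_ne_zero_of_upward_closed
      (P := fun x => ∃ u v, u * a * v ≠ 0 ∧ u * a * v + x = x)
      (fun x z ⟨u, v, h0, hx⟩ => ⟨u, v, h0, by rw [← add_assoc, hx]⟩)
      (fun r x hr ⟨u, v, h0, hx⟩ => ⟨⟨r * u, v, ?_, ?_⟩, ⟨u, v * r, ?_, ?_⟩⟩)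
      ⟨1, 1, by simpa using ha, by simpa using haa⟩ one_ne_zero
    · simpa [mul_assoc] using mul_ne_zero hr h0
    · simp only [mul_assoc] at hx ⊢
      rw [← mul_add, hx]
    · simpa [← mul_assoc] using mul_ne_zero h0 hr
    · rw [← mul_assoc, ← add_mul, hx]
  have hu : 1 + u = u := hle u (left_ne_zero_of_mul (left_ne_zero_of_mul huv0))
  have hv : 1 + v = v := hle v (right_ne_zero_of_mul huv0)
  have hav : a + a * v = a * v := by rw [← mul_one_add, hv]
  have huav : a * v + u * a * v = u * a * v := by rw [mul_assoc, ← one_add_mul, hu]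
  -- `a ≤ u * a * v ≤ 1` for the order `x ≤ y ↔ x + y = y`
  have ha1 : a + 1 = 1 := by
    calc a + 1 = a + (u * a * v + 1) := by rw [huv]
      _ = (a + (a * v + u * a * v)) + 1 := by rw [huav, add_assoc]
      _ = u * a * v + 1 := by rw [← add_assoc, hav, huav]
      _ = 1 := huv
  rw [← hle a ha, add_comm, ha1]

lemma IsIdealSimple.isBooleanSemifield (h : IsIdealSimple S)
    (hzs : ∀ a b : S, a + b = 0 → a = 0) (hab : ∀ a : S, (∃ b, a + b = 0) ∨ ∃ s, a = 1 + s) :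
    IsBooleanSemifield S := by
  have := h.1
  have := noZeroDivisors_of_zeroSumFree hzs hab
  have hone {a : S} (ha : a ≠ 0) : ∃ s, a = 1 + s := exists_eq_one_add_of_ne_zero hzs hab ha
  have h2 : (2 : S) ≠ 0 := fun h2 => one_ne_zero (hzs 1 1 (by rwa [one_add_one_eq_two]))
  obtain ⟨s, hs⟩ := h.exists_mul_eq_one_of_commute (Commute.ofNat_left 2) h2
  obtain ⟨t, rfl⟩ := hone (a := s) (by rintro rfl; exact zero_ne_one (by rwa [mul_zero] at hs))
  have hu : (1 + (t + t)) + 1 = 1 := by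
    calc (1 + (t + t)) + 1 = 2 * (1 + t) := by rw [two_mul]; abel
      _ = 1 := hs
  obtain ⟨y, hy⟩ := h.exists_one_add_eq_self hu fun h0 => one_ne_zero (hzs _ _ h0)
  have hle : ∀ x : S, x ≠ 0 → 1 + x = x := fun x hx =>
    h.forall_ne_zero_of_upward_closed (P := fun x => 1 + x = x)
      (fun x z hx => by rw [← add_assoc, hx])
      (fun r x hr hx => by
        obtain ⟨w, rfl⟩ := hone hr
        exact ⟨by rw [add_mul, one_mul, ← add_assoc, hx],
          by rw [mul_add, mul_one, ← add_assoc, hx]⟩)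
      hy hx
  exact ⟨fun x => (eq_or_ne x 0).imp_right (h.eq_one_of_ne_zero hle), zero_ne_one,
    hle 1 one_ne_zero⟩

lemma exists_add_eq_zero_or_zeroSumFree_of_addUnits
    (h : IsAddUnit.addSubmonoid S = ⊥ ∨ IsAddUnit.addSubmonoid S = ⊤) :
    (∀ a : S, ∃ b, a + b = 0) ∨ ∀ a b : S, a + b = 0 → a = 0 :=
  h.symm.imp
    (fun htop a => isAddUnit_iff_exists_neg.mp ((AddSubmonoid.eq_top_iff' _).mp htop a))
    fun hbot a b hab => (AddSubmonoid.eq_bot_iff_forall _).mp hbot a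
      (isAddUnit_iff_exists_neg.mpr ⟨b, hab⟩)

lemma isAddUnit_addSubmonoid_isTwoSided : (IsAddUnit.addSubmonoid S).IsTwoSided :=
  fun _ ha s => ⟨ha.map (AddMonoidHom.mulLeft s), ha.map (AddMonoidHom.mulRight s)⟩

lemma IsIdealSimple.exists_add_eq_zero_or_zeroSumFree (h : IsIdealSimple S) :
    (∀ a : S, ∃ b, a + b = 0) ∨ ∀ a b : S, a + b = 0 → a = 0 :=
  exists_add_eq_zero_or_zeroSumFree_of_addUnits (h.2 _ isAddUnit_addSubmonoid_isTwoSided)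

lemma IsCongruenceSimple.exists_add_eq_zero_or_zeroSumFree (h : IsCongruenceSimple S) :
    (∀ a : S, ∃ b, a + b = 0) ∨ ∀ a b : S, a + b = 0 → a = 0 :=
  exists_add_eq_zero_or_zeroSumFree_of_addUnits <|
    h.eq_bot_or_eq_top isAddUnit_addSubmonoid_isTwoSided fun _ _ _ hai =>
      (IsAddUnit.add_iff.mp hai).1

theorem antibounded_congruenceSimple_iff_idealSimple_general
    (S : Type u) [Semiring S]
    (hab : ∀ a : S, (∃ b : S, a + b = 0) ∨ (∃ s : S, a = 1 + s)) :
    (IsCongruenceSimple S ↔ IsIdealSimple S) ∧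
    (IsIdealSimple S ↔
      (((∀ a : S, ∃ b : S, a + b = 0) ∧ IsIdealSimple S) ∨
        IsBooleanSemifield S)) := by
  have of_cs (h : IsCongruenceSimple S) :
      ((∀ a : S, ∃ b : S, a + b = 0) ∧ IsIdealSimple S) ∨ IsBooleanSemifield S :=
    h.exists_add_eq_zero_or_zeroSumFree.imp
      (fun hr => ⟨hr, isIdealSimple_of_isCongruenceSimple hr h⟩)
      fun hzs => have := noZeroDivisors_of_zeroSumFree hzs hab; h.isBooleanSemifield hzs
  have of_is (h : IsIdealSimple S) :
      ((∀ a : S, ∃ b : S, a + b = 0) ∧ IsIdealSimple S) ∨ IsBooleanSemifield S :=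
    h.exists_add_eq_zero_or_zeroSumFree.imp (fun hr => ⟨hr, h⟩)
      fun hzs => h.isBooleanSemifield hzs hab
  have to_cs : ((∀ a : S, ∃ b : S, a + b = 0) ∧ IsIdealSimple S) ∨ IsBooleanSemifield S →
      IsCongruenceSimple S :=
    Or.rec (fun h => isCongruenceSimple_of_isIdealSimple h.1 h.2)
      IsBooleanSemifield.isCongruenceSimple
  have to_is : ((∀ a : S, ∃ b : S, a + b = 0) ∧ IsIdealSimple S) ∨ IsBooleanSemifield S →
      IsIdealSimple S :=
    Or.rec And.right IsBooleanSemifield.isIdealSimple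
  exact ⟨⟨to_is ∘ of_cs, to_cs ∘ of_is⟩, of_is, to_is⟩

/-- for a nontrivial anti-bounded semiring `S`, the following are
equivalent: (1) `S` is congruence-simple; (2) `S` is ideal-simple; (3) `S` is a
simple ring (every element has an additive inverse and `S` is ideal-simple), or
`S ≅ B`. -/
theorem antibounded_congruenceSimple_iff_idealSimple
    (S : Type u) [Semiring S] [Nontrivial S]
    (hab : ∀ a : S, (∃ b : S, a + b = 0) ∨ (∃ s : S, a = 1 + s)) :
    (IsCongruenceSimple S ↔ IsIdealSimple S) ∧
    (IsIdealSimple S ↔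
      (((∀ a : S, ∃ b : S, a + b = 0) ∧ IsIdealSimple S) ∨
        IsBooleanSemifield S)) :=
  antibounded_congruenceSimple_iff_idealSimple_general S hab
end

section
/- Let M be an additively idempotent additive commutative monoid (m + m = m for all m ∈ M), i.e., a semimodule over the Boolean semifield B. If the endomorphism semiring AddMonoid.End M is a right CP-semiring, then M is finite and carries a distributive lattice structure whose join is the addition: there exists a DistribLattice structure on M with a + b = a ⊔ b for all a, b ∈ M. -/
universe u

/-- A right CP-semiring: every cyclic right `S`-semimodule (i.e., left
`Sᵐᵒᵖ`-semimodule) is projective. -/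
def IsRightCPSemiring (S : Type u) [Semiring S] : Prop :=
  ∀ (M : Type u) [AddCommMonoid M] [Module Sᵐᵒᵖ M],
    (∃ m : M, Submodule.span Sᵐᵒᵖ {m} = ⊤) → Module.Projective Sᵐᵒᵖ M

namespace CP18

variable {M : Type u} [AddCommMonoid M]

lemma absorb_left (hM : ∀ m : M, m + m = m) {x y p : M} (h : (x + y) + p = p) : x + p = p := by
  calc x + p = x + ((x + y) + p) := by rw [h]
    _ = ((x + x) + y) + p := by rw [← add_assoc, ← add_assoc]
    _ = (x + y) + p := by rw [hM x]
    _ = p := h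

lemma absorb_right (hM : ∀ m : M, m + m = m) {x y p : M} (h : (x + y) + p = p) : y + p = p :=
  absorb_left hM (by rwa [add_comm x y] at h)

lemma absorb_add {x y p : M} (hx : x + p = p) (hy : y + p = p) : (x + y) + p = p := by
  rw [add_assoc, hy, hx]

lemma eq_zero_left (hM : ∀ m : M, m + m = m) {x y : M} (h : x + y = 0) : x = 0 := by
  have h2 : (x + y) + (0 : M) = 0 := by rw [add_zero, h]
  have := absorb_left hM h2
  rwa [add_zero] at this

lemma endAdd_apply (f g : AddMonoid.End M) (x : M) : (f + g) x = f x + g x := rfl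

open Classical in
/-- The additive endomorphism sending `x` to `0` if `x ≤ p` and to `q` otherwise. -/
noncomputable def stepMap (hM : ∀ m : M, m + m = m) (p q : M) : AddMonoid.End M :=
  { toFun := fun x => if x + p = p then 0 else q
    map_zero' := by
      show (if (0 : M) + p = p then 0 else q) = 0
      rw [if_pos (zero_add p)]
    map_add' := by
      intro x y
      show (if (x + y) + p = p then 0 else q)
        = (if x + p = p then 0 else q) + (if y + p = p then 0 else q)
      by_cases hx : x + p = p <;> by_cases hy : y + p = p
      · rw [if_pos hx, if_pos hy, if_pos (absorb_add hx hy), add_zero]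
      · rw [if_pos hx, if_neg hy, if_neg (fun hc => hy (absorb_right hM hc)), zero_add]
      · rw [if_neg hx, if_pos hy, if_neg (fun hc => hx (absorb_left hM hc)), add_zero]
      · rw [if_neg hx, if_neg hy, if_neg (fun hc => hx (absorb_left hM hc)), hM q] }

open Classical in
lemma stepMap_apply (hM : ∀ m : M, m + m = m) (p q x : M) :
    stepMap hM p q x = if x + p = p then 0 else q := rfl

open Classical in
/-- The additive endomorphism sending `0` to `0` and everything else to `u`. -/
noncomputable def zMap (hM : ∀ m : M, m + m = m) (u : M) : AddMonoid.End M :=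
  { toFun := fun x => if x = 0 then 0 else u
    map_zero' := by
      show (if (0 : M) = 0 then 0 else u) = 0
      rw [if_pos rfl]
    map_add' := by
      intro x y
      show (if x + y = 0 then 0 else u) = (if x = 0 then 0 else u) + (if y = 0 then 0 else u)
      by_cases hx : x = 0 <;> by_cases hy : y = 0
      · subst hx; subst hy; rw [add_zero, if_pos rfl, add_zero]
      · subst hx; rw [zero_add, if_pos rfl, zero_add]
      · subst hy; rw [add_zero, if_pos rfl, add_zero]
      · rw [if_neg hx, if_neg hy, if_neg (fun hc => hx (eq_zero_left hM hc)), hM u] }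

open Classical in
lemma zMap_apply (hM : ∀ m : M, m + m = m) (u x : M) :
    zMap hM u x = if x = 0 then 0 else u := rfl

section split

variable (c : AddCon (AddMonoid.End M))

/-- Scalar multiplication of `(End M)ᵐᵒᵖ` on the quotient by a right-stable congruence. -/
def qsmul (hc : ∀ f g h : AddMonoid.End M, c f g → c (f * h) (g * h)) :
    (AddMonoid.End M)ᵐᵒᵖ → c.Quotient → c.Quotient := fun m q =>
  Quotient.map' (fun f => f * m.unop) (fun f g hfg => hc f g m.unop hfg) q

variable (hc : ∀ f g h : AddMonoid.End M, c f g → c (f * h) (g * h))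

lemma qsmul_mk (m : (AddMonoid.End M)ᵐᵒᵖ) (f : AddMonoid.End M) :
    qsmul c hc m (f : c.Quotient) = ((f * m.unop : AddMonoid.End M) : c.Quotient) := rfl

/-- The quotient by a right-stable congruence is a right module (left `ᵐᵒᵖ`-module). -/
def qmodule : Module (AddMonoid.End M)ᵐᵒᵖ c.Quotient where
  smul := qsmul c hc
  one_smul q := AddCon.induction_on q fun f => by
    show qsmul c hc 1 (f : c.Quotient) = (f : c.Quotient)
    rw [qsmul_mk]; norm_num
  mul_smul m n q := AddCon.induction_on q fun f => by
    show qsmul c hc (m * n) (f : c.Quotient) = qsmul c hc m (qsmul c hc n (f : c.Quotient))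
    rw [qsmul_mk, qsmul_mk, qsmul_mk, MulOpposite.unop_mul, ← mul_assoc]
  smul_zero m := by
    show qsmul c hc m ((0 : AddMonoid.End M) : c.Quotient) = ((0 : AddMonoid.End M) : c.Quotient)
    rw [qsmul_mk, zero_mul]
  smul_add m q r := AddCon.induction_on₂ q r fun f g => by
    show qsmul c hc m ((f + g : AddMonoid.End M) : c.Quotient)
      = qsmul c hc m (f : c.Quotient) + qsmul c hc m (g : c.Quotient)
    rw [qsmul_mk, qsmul_mk, qsmul_mk, add_mul, AddCon.coe_add]
  add_smul m n q := AddCon.induction_on q fun f => by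
    show qsmul c hc (m + n) (f : c.Quotient)
      = qsmul c hc m (f : c.Quotient) + qsmul c hc n (f : c.Quotient)
    rw [qsmul_mk, qsmul_mk, qsmul_mk, MulOpposite.unop_add, mul_add, AddCon.coe_add]
  zero_smul q := AddCon.induction_on q fun f => by
    show qsmul c hc 0 (f : c.Quotient) = ((0 : AddMonoid.End M) : c.Quotient)
    rw [qsmul_mk, MulOpposite.unop_zero, mul_zero]

include hc in
/-- The key consequence of the CP property: any right-stable congruence on `End M`
splits off at `1`. -/
lemma exists_split (h : IsRightCPSemiring (AddMonoid.End M)) :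
    ∃ e : AddMonoid.End M, c e 1 ∧ ∀ f g : AddMonoid.End M, c f g → e * f = e * g := by
  letI : Module (AddMonoid.End M)ᵐᵒᵖ c.Quotient := qmodule c hc
  have hsmul_mk : ∀ (m : (AddMonoid.End M)ᵐᵒᵖ) (f : AddMonoid.End M),
      m • (f : c.Quotient) = ((f * m.unop : AddMonoid.End M) : c.Quotient) := fun m f => rfl
  let π : AddMonoid.End M →ₗ[(AddMonoid.End M)ᵐᵒᵖ] c.Quotient :=
    { toFun := fun f => (f : c.Quotient)
      map_add' := fun f g => by
        show ((f + g : AddMonoid.End M) : c.Quotient) = (f : c.Quotient) + (g : c.Quotient)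
        rw [AddCon.coe_add]
      map_smul' := fun m f => rfl }
  have hπ : Function.Surjective π := fun q => AddCon.induction_on q fun f => ⟨f, rfl⟩
  have hproj : Module.Projective (AddMonoid.End M)ᵐᵒᵖ c.Quotient := by
    refine h c.Quotient ⟨((1 : AddMonoid.End M) : c.Quotient), ?_⟩
    rw [Submodule.eq_top_iff']
    intro q
    refine AddCon.induction_on q fun f => ?_
    have hf : (MulOpposite.op f) • ((1 : AddMonoid.End M) : c.Quotient) = (f : c.Quotient) := by
      rw [hsmul_mk, MulOpposite.unop_op, one_mul]
    exact hf ▸ Submodule.smul_mem _ _ (Submodule.mem_span_singleton_self _)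
  obtain ⟨σ, hσ⟩ := Module.projective_lifting_property π LinearMap.id hπ
  have hσ' : ∀ q, π (σ q) = q := fun q => by
    have := LinearMap.ext_iff.1 hσ q
    rwa [LinearMap.comp_apply, LinearMap.id_apply] at this
  refine ⟨σ ((1 : AddMonoid.End M) : c.Quotient), ?_, ?_⟩
  · exact c.eq.1 (hσ' ((1 : AddMonoid.End M) : c.Quotient))
  · intro f g hfg
    have e1 : ∀ k : AddMonoid.End M,
        σ ((k : c.Quotient)) = σ ((1 : AddMonoid.End M) : c.Quotient) * k := by
      intro k
      have hk : ((k : c.Quotient)) = (MulOpposite.op k) • ((1 : AddMonoid.End M) : c.Quotient) := by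
        rw [hsmul_mk, MulOpposite.unop_op, one_mul]
      rw [hk, map_smul]
      rfl
    have hfg' : ((f : c.Quotient)) = ((g : c.Quotient)) := c.eq.2 hfg
    rw [← e1 f, ← e1 g, hfg']

end split


/-- Killer 1: under CP, every element below a join `y + z` (other than the join itself)
is below `y` or below `z`. Stated as: a violating triple yields `False`. -/
lemma k1 (hM : ∀ m : M, m + m = m) (h : IsRightCPSemiring (AddMonoid.End M))
    (p y z : M) (hpv : p + (y + z) = y + z) (hpy : p + y ≠ y) (hpz : p + z ≠ z)
    (hne : p ≠ y + z) : False := by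
  classical
  set v := y + z with hv
  have hyv : y + v = v := by rw [hv, ← add_assoc, hM]
  have hzv : z + v = v := by
    rw [hv, add_comm y z, ← add_assoc, hM, add_comm]
  set f₀ := stepMap hM p p with hf₀
  set g₀ := stepMap hM p v with hg₀
  set R : AddMonoid.End M → AddMonoid.End M → Prop := fun s t =>
    ∃ hh kk : AddMonoid.End M,
      (s = f₀ * hh + kk ∧ t = g₀ * hh + kk) ∨ (s = g₀ * hh + kk ∧ t = f₀ * hh + kk) with hR
  have Rsymm : ∀ {s t}, R s t → R t s := by
    rintro s t ⟨hh, kk, (⟨h1, h2⟩ | ⟨h1, h2⟩)⟩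
    · exact ⟨hh, kk, Or.inr ⟨h2, h1⟩⟩
    · exact ⟨hh, kk, Or.inl ⟨h2, h1⟩⟩
  have Radd : ∀ {s t} (u : AddMonoid.End M), R s t → R (s + u) (t + u) := by
    rintro s t u ⟨hh, kk, (⟨rfl, rfl⟩ | ⟨rfl, rfl⟩)⟩
    · exact ⟨hh, kk + u, Or.inl ⟨add_assoc _ _ _, add_assoc _ _ _⟩⟩
    · exact ⟨hh, kk + u, Or.inr ⟨add_assoc _ _ _, add_assoc _ _ _⟩⟩
  have Rmul : ∀ {s t} (u : AddMonoid.End M), R s t → R (s * u) (t * u) := by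
    rintro s t u ⟨hh, kk, (⟨rfl, rfl⟩ | ⟨rfl, rfl⟩)⟩
    · exact ⟨hh * u, kk * u, Or.inl ⟨by rw [add_mul, mul_assoc], by rw [add_mul, mul_assoc]⟩⟩
    · exact ⟨hh * u, kk * u, Or.inr ⟨by rw [add_mul, mul_assoc], by rw [add_mul, mul_assoc]⟩⟩
  have EGadd : ∀ (u : AddMonoid.End M) {s t}, Relation.EqvGen R s t →
      Relation.EqvGen R (s + u) (t + u) := by
    intro u s t hst
    induction hst with
    | rel a b hr => exact .rel _ _ (Radd u hr)
    | refl a => exact .refl _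
    | symm a b _ ih => exact .symm _ _ ih
    | trans a b cc _ _ ih1 ih2 => exact .trans _ _ _ ih1 ih2
  have EGmul : ∀ (u : AddMonoid.End M) {s t}, Relation.EqvGen R s t →
      Relation.EqvGen R (s * u) (t * u) := by
    intro u s t hst
    induction hst with
    | rel a b hr => exact .rel _ _ (Rmul u hr)
    | refl a => exact .refl _
    | symm a b _ ih => exact .symm _ _ ih
    | trans a b cc _ _ ih1 ih2 => exact .trans _ _ _ ih1 ih2
  set c : AddCon (AddMonoid.End M) :=
    { r := Relation.EqvGen R
      iseqv := Relation.EqvGen.is_equivalence R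
      add' := by
        intro w x y' z' h1 h2
        refine Relation.EqvGen.trans _ _ _ (EGadd y' h1) ?_
        have := EGadd x h2
        rwa [add_comm y' x, add_comm z' x] at this } with hcdef
  have hc : ∀ f g hh : AddMonoid.End M, c f g → c (f * hh) (g * hh) :=
    fun f g hh hfg => EGmul hh hfg
  -- the invariant
  set Phi : AddMonoid.End M → Prop := fun e => ∀ w, w + v = v → e w = w with hPhi
  have PhiR : ∀ {s t}, R s t → Phi s → Phi t := by
    rintro s t ⟨hh, kk, H⟩
    rcases H with ⟨hs_eq, ht_eq⟩ | ⟨hs_eq, ht_eq⟩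
    · -- s = f₀ * hh + kk, t = g₀ * hh + kk
      intro hs
      have hhy : hh y + p = p := by
        by_contra hcon
        have h1 := hs y hyv
        rw [hs_eq] at h1
        rw [endAdd_apply, AddMonoid.End.coe_mul, Function.comp_apply,
          stepMap_apply, if_neg hcon] at h1
        -- h1 : p + kk y = y
        have h2 : p + y = y := by
          conv_lhs => rw [← h1, ← add_assoc, hM p]
          exact h1
        exact hpy h2
      have hhz : hh z + p = p := by
        by_contra hcon
        have h1 := hs z hzv
        rw [hs_eq] at h1
        rw [endAdd_apply, AddMonoid.End.coe_mul, Function.comp_apply,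
          stepMap_apply, if_neg hcon] at h1
        have h2 : p + z = z := by
          conv_lhs => rw [← h1, ← add_assoc, hM p]
          exact h1
        exact hpz h2
      have hhw : ∀ w, w + v = v → hh w + p = p := by
        intro w hw
        have hhv : hh v + p = p := by
          have hmap : hh v = hh y + hh z := by rw [hv, map_add]
          rw [hmap]
          exact absorb_add hhy hhz
        have hadd : hh w + hh v = hh v := by rw [← map_add, hw]
        calc hh w + p = hh w + (hh v + p) := by rw [hhv]
          _ = (hh w + hh v) + p := (add_assoc _ _ _).symm
          _ = hh v + p := by rw [hadd]
          _ = p := hhv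
      intro w hw
      have e1 : g₀ (hh w) = 0 := by rw [hg₀, stepMap_apply, if_pos (hhw w hw)]
      have e2 : f₀ (hh w) = 0 := by rw [hf₀, stepMap_apply, if_pos (hhw w hw)]
      have h1 := hs w hw
      rw [hs_eq, endAdd_apply, AddMonoid.End.coe_mul, Function.comp_apply, e2,
        zero_add] at h1
      rw [ht_eq, endAdd_apply, AddMonoid.End.coe_mul, Function.comp_apply, e1,
        zero_add]
      exact h1
    · -- s = g₀ * hh + kk, t = f₀ * hh + kk
      intro hs
      have hhy : hh y + p = p := by
        by_contra hcon
        have h1 := hs y hyv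
        rw [hs_eq] at h1
        rw [endAdd_apply, AddMonoid.End.coe_mul, Function.comp_apply,
          stepMap_apply, if_neg hcon] at h1
        -- h1 : v + kk y = y
        have h2 : v + y = y := by
          conv_lhs => rw [← h1, ← add_assoc, hM v]
          exact h1
        -- p + y = p + (v + y) = (p + v) + y = v + y = y
        have h3 : p + y = y := by
          calc p + y = p + (v + y) := by rw [h2]
            _ = (p + v) + y := (add_assoc _ _ _).symm
            _ = v + y := by rw [hpv]
            _ = y := h2
        exact hpy h3
      have hhz : hh z + p = p := by
        by_contra hcon
        have h1 := hs z hzv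
        rw [hs_eq] at h1
        rw [endAdd_apply, AddMonoid.End.coe_mul, Function.comp_apply,
          stepMap_apply, if_neg hcon] at h1
        have h2 : v + z = z := by
          conv_lhs => rw [← h1, ← add_assoc, hM v]
          exact h1
        have h3 : p + z = z := by
          calc p + z = p + (v + z) := by rw [h2]
            _ = (p + v) + z := (add_assoc _ _ _).symm
            _ = v + z := by rw [hpv]
            _ = z := h2
        exact hpz h3
      have hhw : ∀ w, w + v = v → hh w + p = p := by
        intro w hw
        have hhv : hh v + p = p := by
          have hmap : hh v = hh y + hh z := by rw [hv, map_add]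
          rw [hmap]
          exact absorb_add hhy hhz
        have hadd : hh w + hh v = hh v := by rw [← map_add, hw]
        calc hh w + p = hh w + (hh v + p) := by rw [hhv]
          _ = (hh w + hh v) + p := (add_assoc _ _ _).symm
          _ = hh v + p := by rw [hadd]
          _ = p := hhv
      intro w hw
      have e1 : g₀ (hh w) = 0 := by rw [hg₀, stepMap_apply, if_pos (hhw w hw)]
      have e2 : f₀ (hh w) = 0 := by rw [hf₀, stepMap_apply, if_pos (hhw w hw)]
      have h1 := hs w hw
      rw [hs_eq, endAdd_apply, AddMonoid.End.coe_mul, Function.comp_apply, e1,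
        zero_add] at h1
      rw [ht_eq, endAdd_apply, AddMonoid.End.coe_mul, Function.comp_apply, e2,
        zero_add]
      exact h1
  have PhiIff : ∀ {s t}, Relation.EqvGen R s t → (Phi s ↔ Phi t) := by
    intro s t hst
    induction hst with
    | rel a b hr => exact ⟨PhiR hr, PhiR (Rsymm hr)⟩
    | refl a => exact Iff.rfl
    | symm a b _ ih => exact ih.symm
    | trans a b cc _ _ ih1 ih2 => exact ih1.trans ih2
  obtain ⟨e, he1, he2⟩ := exists_split c hc h
  have hPhi1 : Phi 1 := fun w _ => AddMonoid.End.one_apply w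
  have hPhie : Phi e := (PhiIff he1).2 hPhi1
  have hRfg : R f₀ g₀ := ⟨1, 0, Or.inl ⟨by rw [mul_one, add_zero], by rw [mul_one, add_zero]⟩⟩
  have heq : e * f₀ = e * g₀ := he2 f₀ g₀ (Relation.EqvGen.rel _ _ hRfg)
  have hvp : ¬ (v + p = p) := by
    intro hcon
    apply hne
    have : v = p := by
      calc v = p + v := hpv.symm
        _ = v + p := add_comm p v
        _ = p := hcon
    exact this.symm
  have happ := congrArg (fun f : AddMonoid.End M => f v) heq
  simp only [AddMonoid.End.coe_mul, Function.comp_apply] at happ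
  rw [hf₀, hg₀, stepMap_apply, stepMap_apply, if_neg hvp, if_neg hvp] at happ
  -- happ : e p = e v
  have hep : e p = p := hPhie p hpv
  have hev : e v = v := hPhie v (hM v)
  rw [hep, hev] at happ
  exact hne happ

/-- Killer 2: no strictly ascending chains under CP. -/
lemma k2 (hM : ∀ m : M, m + m = m) (h : IsRightCPSemiring (AddMonoid.End M))
    (a : ℕ → M) (hle : ∀ n, a n + a (n + 1) = a (n + 1)) (hne : ∀ n, a n ≠ a (n + 1)) :
    False := by
  classical
  have amono : ∀ m n, m ≤ n → a m + a n = a n := by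
    intro m n hmn
    induction n, hmn using Nat.le_induction with
    | base => exact hM (a m)
    | succ n hmn ih =>
      calc a m + a (n + 1) = a m + (a n + a (n + 1)) := by rw [hle n]
        _ = (a m + a n) + a (n + 1) := (add_assoc _ _ _).symm
        _ = a n + a (n + 1) := by rw [ih]
        _ = a (n + 1) := hle n
  have lift : ∀ {f g : AddMonoid.End M} {n N : ℕ}, n ≤ N →
      (∀ x, f x + a n = g x + a n) → ∀ x, f x + a N = g x + a N := by
    intro f g n N hnN hfg x
    have e1 : a n + a N = a N := amono _ _ hnN
    calc f x + a N = f x + (a n + a N) := by rw [e1]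
      _ = (f x + a n) + a N := (add_assoc _ _ _).symm
      _ = (g x + a n) + a N := by rw [hfg x]
      _ = g x + (a n + a N) := add_assoc _ _ _
      _ = g x + a N := by rw [e1]
  set c : AddCon (AddMonoid.End M) :=
    { r := fun f g => ∃ n, ∀ x, f x + a n = g x + a n
      iseqv := ⟨fun f => ⟨0, fun x => rfl⟩,
        fun ⟨n, hn⟩ => ⟨n, fun x => (hn x).symm⟩,
        fun {f g k} ⟨n₁, h₁⟩ ⟨n₂, h₂⟩ => ⟨max n₁ n₂, fun x =>
          (lift (le_max_left n₁ n₂) h₁ x).trans (lift (le_max_right n₁ n₂) h₂ x)⟩⟩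
      add' := by
        rintro w x y' z' ⟨n₁, h₁⟩ ⟨n₂, h₂⟩
        refine ⟨max n₁ n₂, fun x' => ?_⟩
        have H1 := lift (le_max_left n₁ n₂) h₁ x'
        have H2 := lift (le_max_right n₁ n₂) h₂ x'
        set N := max n₁ n₂
        calc (w + y') x' + a N = (w x' + y' x') + a N := by rw [endAdd_apply]
          _ = (w x' + y' x') + (a N + a N) := by rw [hM]
          _ = (w x' + a N) + (y' x' + a N) := add_add_add_comm _ _ _ _
          _ = (x x' + a N) + (z' x' + a N) := by rw [H1, H2]
          _ = (x x' + z' x') + (a N + a N) := (add_add_add_comm _ _ _ _).symm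
          _ = (x x' + z' x') + a N := by rw [hM]
          _ = (x + z') x' + a N := by rw [endAdd_apply] } with hcdef
  have hc : ∀ f g hh : AddMonoid.End M, c f g → c (f * hh) (g * hh) := by
    rintro f g hh ⟨n, hn⟩
    exact ⟨n, fun x => hn (hh x)⟩
  obtain ⟨e, he1, he2⟩ := exists_split c hc h
  have ha1 : a 1 ≠ 0 := by
    intro hcon
    apply hne 0
    have := hle 0
    rw [hcon, add_zero] at this
    rw [this, hcon]
  have h0m : ∀ m : ℕ, c 0 (zMap hM (a m)) := by
    intro m
    refine ⟨m, fun x => ?_⟩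
    rw [AddMonoid.End.zero_apply, zMap_apply]
    by_cases hx : x = 0
    · rw [if_pos hx]
    · rw [if_neg hx, hM, zero_add]
  have hzero : ∀ m : ℕ, e (a m) = 0 := by
    intro m
    have heq := he2 0 (zMap hM (a m)) (h0m m)
    rw [mul_zero] at heq
    have happ := congrArg (fun f : AddMonoid.End M => f (a 1)) heq.symm
    simp only [AddMonoid.End.coe_mul, Function.comp_apply, AddMonoid.End.zero_apply] at happ
    rw [zMap_apply, if_neg ha1] at happ
    exact happ
  obtain ⟨n, hn⟩ := he1
  have hx := hn (a (n + 1))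
  rw [hzero (n + 1), AddMonoid.End.one_apply, zero_add] at hx
  -- hx : a n = a (n+1) + a n
  have : a n = a (n + 1) := by
    rw [hx, add_comm, hle n]
  exact hne n this

/-- Killer 3: no strictly descending chains under CP. -/
lemma k3 (hM : ∀ m : M, m + m = m) (h : IsRightCPSemiring (AddMonoid.End M))
    (a : ℕ → M) (hle : ∀ n, a (n + 1) + a n = a n) (hne : ∀ n, a (n + 1) ≠ a n) :
    False := by
  classical
  have amono : ∀ m n, m ≤ n → a n + a m = a m := by
    intro m n hmn
    induction n, hmn using Nat.le_induction with
    | base => exact hM (a m)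
    | succ n hmn ih =>
      calc a (n + 1) + a m = a (n + 1) + (a n + a m) := by rw [ih]
        _ = (a (n + 1) + a n) + a m := (add_assoc _ _ _).symm
        _ = a n + a m := by rw [hle n]
        _ = a m := ih
  have addiff : ∀ u w p : M, ((u + w) + p = p) ↔ (u + p = p ∧ w + p = p) :=
    fun u w p => ⟨fun hh => ⟨absorb_left hM hh, absorb_right hM hh⟩,
      fun ⟨h1, h2⟩ => absorb_add h1 h2⟩
  have hnotle : ∀ k m : ℕ, k < m → ¬ (a k + a m = a m) := by
    intro k m hkm hcon
    have h1 : a m + a k = a k := amono k m hkm.le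
    have hkm' : a k = a m := by
      calc a k = a m + a k := h1.symm
        _ = a k + a m := add_comm _ _
        _ = a m := hcon
    apply hne k
    have hsm : a m + a (k + 1) = a (k + 1) := amono (k + 1) m hkm
    have h2 : a k + a (k + 1) = a (k + 1) := by rw [hkm']; exact hsm
    have hconc : a k = a (k + 1) := by
      calc a k = a (k + 1) + a k := (hle k).symm
        _ = a k + a (k + 1) := add_comm _ _
        _ = a (k + 1) := h2
    exact hconc.symm
  set c : AddCon (AddMonoid.End M) :=
    { r := fun f g => ∃ n, ∀ m, n ≤ m → ∀ x, (f x + a m = a m ↔ g x + a m = a m)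
      iseqv := ⟨fun f => ⟨0, fun m _ x => Iff.rfl⟩,
        fun ⟨n, hn⟩ => ⟨n, fun m hm x => (hn m hm x).symm⟩,
        fun {f g k} ⟨n₁, h₁⟩ ⟨n₂, h₂⟩ => ⟨max n₁ n₂, fun m hm x =>
          (h₁ m (le_trans (le_max_left _ _) hm) x).trans
            (h₂ m (le_trans (le_max_right _ _) hm) x)⟩⟩
      add' := by
        rintro w x y' z' ⟨n₁, h₁⟩ ⟨n₂, h₂⟩
        refine ⟨max n₁ n₂, fun m hm x' => ?_⟩
        rw [endAdd_apply, endAdd_apply, addiff, addiff]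
        rw [h₁ m (le_trans (le_max_left _ _) hm) x', h₂ m (le_trans (le_max_right _ _) hm) x'] }
    with hcdef
  have hc : ∀ f g hh : AddMonoid.End M, c f g → c (f * hh) (g * hh) := by
    rintro f g hh ⟨n, hn⟩
    exact ⟨n, fun m hm x => hn m hm (hh x)⟩
  obtain ⟨e, he1, he2⟩ := exists_split c hc h
  have ha0 : a 0 ≠ 0 := by
    intro hcon
    apply hne 0
    have := hle 0
    rw [hcon, add_zero] at this
    rw [this, hcon]
  have hkl : ∀ k l : ℕ, c (zMap hM (a k)) (zMap hM (a l)) := by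
    intro k l
    refine ⟨max k l + 1, fun m hm x => ?_⟩
    rw [zMap_apply, zMap_apply]
    by_cases hx : x = 0
    · rw [if_pos hx, if_pos hx]
    · rw [if_neg hx, if_neg hx]
      have hk : k < m := lt_of_le_of_lt (le_max_left k l) (Nat.lt_of_succ_le hm)
      have hl : l < m := lt_of_le_of_lt (le_max_right k l) (Nat.lt_of_succ_le hm)
      exact iff_of_false (hnotle k m hk) (hnotle l m hl)
  have euv : ∀ k l : ℕ, e (a k) = e (a l) := by
    intro k l
    have heq := he2 _ _ (hkl k l)
    have happ := congrArg (fun f : AddMonoid.End M => f (a 0)) heq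
    simp only [AddMonoid.End.coe_mul, Function.comp_apply] at happ
    rwa [zMap_apply, zMap_apply, if_neg ha0, if_neg ha0] at happ
  obtain ⟨n, hn⟩ := he1
  have hEm : ∀ m, n ≤ m → e (a m) + a m = a m := by
    intro m hm
    have := hn m hm (a m)
    rw [AddMonoid.End.one_apply] at this
    exact this.2 (hM (a m))
  have hkey := hn (n + 1) (Nat.le_succ n) (a n)
  rw [AddMonoid.End.one_apply] at hkey
  have hLHS : e (a n) + a (n + 1) = a (n + 1) := by
    rw [euv n (n + 1)]
    exact hEm (n + 1) (Nat.le_succ n)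
  have hcon : a n + a (n + 1) = a (n + 1) := hkey.1 hLHS
  apply hne n
  have hconc : a n = a (n + 1) := by
    calc a n = a (n + 1) + a n := (hle n).symm
      _ = a n + a (n + 1) := add_comm _ _
      _ = a (n + 1) := hcon
  exact hconc.symm


/-- A partial order with a bottom, no 3-element antichains, and both `<` and `>`
well-founded, is finite. -/
lemma finite_of_wf {α : Type u} [PartialOrder α] [OrderBot α]
    (h3 : ∀ a b c : α, ¬a ≤ b → ¬b ≤ a → ¬a ≤ c → ¬c ≤ a → ¬b ≤ c → ¬c ≤ b → False)
    (hlt : WellFounded ((· < ·) : α → α → Prop))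
    (hgt : WellFounded ((· > ·) : α → α → Prop)) : Finite α := by
  have key : ∀ x : α, {w : α | x < w}.Finite := by
    intro x
    refine hgt.induction (C := fun x => {w : α | x < w}.Finite) x ?_
    clear x
    intro x ih
    set Min : Set α := {m : α | x < m ∧ ∀ w, x < w → w ≤ m → w = m} with hMindef
    have key2 : ∀ m₁ m₂, m₁ ∈ Min → m₂ ∈ Min → m₁ ≠ m₂ → ¬ m₁ ≤ m₂ :=
      fun m₁ m₂ h1 h2 hne hle => hne (h2.2 m₁ h1.1 hle)
    have hMinFin : Min.Finite := by
      by_contra hinf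
      have hinf : Min.Infinite := hinf
      obtain ⟨a, ha⟩ := hinf.nonempty
      obtain ⟨b, hb⟩ := (hinf.diff (Set.finite_singleton a)).nonempty
      obtain ⟨c, hc⟩ := (hinf.diff ((Set.finite_singleton b).insert a)).nonempty
      have hba : b ≠ a := by
        intro hh; exact hb.2 (by rw [hh]; exact Set.mem_singleton a)
      have hca : c ≠ a := by
        intro hh; exact hc.2 (by rw [hh]; exact Set.mem_insert a {b})
      have hcb : c ≠ b := by
        intro hh; exact hc.2 (by rw [hh]; exact Set.mem_insert_of_mem a (Set.mem_singleton b))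
      exact h3 a b c
        (key2 a b ha hb.1 hba.symm) (key2 b a hb.1 ha hba)
        (key2 a c ha hc.1 hca.symm) (key2 c a hc.1 ha hca)
        (key2 b c hb.1 hc.1 hcb.symm) (key2 c b hc.1 hb.1 hcb)
    have hsub : {w : α | x < w} ⊆ ⋃ m ∈ Min, insert m {w : α | m < w} := by
      intro w hw
      obtain ⟨m, hm, hmin⟩ := hlt.has_min {u : α | x < u ∧ u ≤ w} ⟨w, hw, le_rfl⟩
      have hmMin : m ∈ Min :=
        ⟨hm.1, fun u hu hum =>
          hum.lt_or_eq.resolve_left (hmin u ⟨hu, le_trans hum hm.2⟩)⟩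
      refine Set.mem_biUnion hmMin ?_
      rcases eq_or_lt_of_le hm.2 with he | hl
      · rw [← he]; exact Set.mem_insert m _
      · exact Set.mem_insert_of_mem m hl
    exact Set.Finite.subset (hMinFin.biUnion fun m hm => (ih m hm.1).insert m) hsub
  have huniv : (Set.univ : Set α).Finite := by
    have hsub : (Set.univ : Set α) ⊆ insert ⊥ {w : α | ⊥ < w} := by
      intro w _
      rcases eq_or_ne w ⊥ with hh | hh
      · rw [hh]; exact Set.mem_insert ⊥ _
      · exact Set.mem_insert_of_mem ⊥ (bot_lt_iff_ne_bot.2 hh)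
    exact Set.Finite.subset ((key ⊥).insert ⊥) hsub
  exact Set.finite_univ_iff.1 huniv

end CP18

/-- if `M` is an additively idempotent commutative monoid (a
`B`-semimodule) whose endomorphism semiring is a right CP-semiring, then `M` is
a finite distributive lattice whose join is the addition. -/
theorem finite_distribLattice_of_end_isRightCPSemiring
    (M : Type u) [AddCommMonoid M] (hM : ∀ m : M, m + m = m)
    (h : IsRightCPSemiring (AddMonoid.End M)) :
    Finite M ∧ ∃ _ : DistribLattice M, ∀ a b : M, a + b = a ⊔ b := by
  classical
  letI po : PartialOrder M :=
    { le := fun a b => a + b = b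
      le_refl := hM
      le_trans := fun a b c hab hbc => by
        show a + c = c
        calc a + c = a + (b + c) := by rw [hbc]
          _ = (a + b) + c := (add_assoc _ _ _).symm
          _ = b + c := by rw [hab]
          _ = c := hbc
      le_antisymm := fun a b h1 h2 => by
        show a = b
        calc a = b + a := h2.symm
          _ = a + b := add_comm _ _
          _ = b := h1 }
  letI sl : SemilatticeSup M :=
    { po with
      sup := fun a b => a + b
      le_sup_left := fun a b => by
        show a + (a + b) = a + b
        rw [← add_assoc, hM]
      le_sup_right := fun a b => by
        show b + (a + b) = a + b
        rw [add_comm a b, ← add_assoc, hM]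
      sup_le := fun a b c hac hbc => CP18.absorb_add hac hbc }
  letI ob : OrderBot M :=
    { bot := 0
      bot_le := fun a => zero_add a }
  have jp : ∀ p q r : M, p ≤ q ⊔ r → p ≤ q ∨ p ≤ r ∨ p = q ⊔ r := by
    intro p q r hp
    rcases Classical.em (p ≤ q) with h1 | h1
    · exact Or.inl h1
    rcases Classical.em (p ≤ r) with h2 | h2
    · exact Or.inr (Or.inl h2)
    refine Or.inr (Or.inr ?_)
    by_contra hcon
    exact CP18.k1 hM h p q r hp h1 h2 hcon
  have noanti : ∀ a b c : M, ¬a ≤ b → ¬b ≤ a → ¬a ≤ c → ¬c ≤ a → ¬b ≤ c → ¬c ≤ b → False := by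
    intro a b c hab hba hac hca hbc hcb
    have hA : ¬ a ≤ b ⊔ c := by
      intro hle
      rcases jp a b c hle with hh | hh | hh
      · exact hab hh
      · exact hac hh
      · exact hba (hh ▸ le_sup_left)
    have hstep : a ⊔ b ≤ a ⊔ (b ⊔ c) := sup_le_sup_left le_sup_left a
    rcases jp (a ⊔ b) a (b ⊔ c) hstep with hh | hh | hh
    · exact hba (le_trans le_sup_right hh)
    · exact hA (le_trans le_sup_left hh)
    · have hcab : c ≤ a ⊔ b := by
        rw [hh]
        exact le_trans (le_sup_right : c ≤ b ⊔ c) le_sup_right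
      rcases jp c a b hcab with hh' | hh' | hh'
      · exact hca hh'
      · exact hcb hh'
      · exact hac (hh' ▸ le_sup_left)
  have hwflt : WellFounded ((· < ·) : M → M → Prop) := by
    rw [RelEmbedding.wellFounded_iff_isEmpty]
    by_contra hcon
    rw [not_isEmpty_iff] at hcon
    obtain ⟨g⟩ := hcon
    refine CP18.k3 hM h (fun n => g n) (fun n => ?_) (fun n => ?_)
    · exact (g.map_rel_iff.2 (Nat.lt_succ_self n)).le
    · exact (g.map_rel_iff.2 (Nat.lt_succ_self n)).ne
  have hwfgt : WellFounded ((· > ·) : M → M → Prop) := by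
    rw [RelEmbedding.wellFounded_iff_isEmpty]
    by_contra hcon
    rw [not_isEmpty_iff] at hcon
    obtain ⟨g⟩ := hcon
    refine CP18.k2 hM h (fun n => g n) (fun n => ?_) (fun n => ?_)
    · exact (g.map_rel_iff.2 (Nat.lt_succ_self n)).le
    · exact (g.map_rel_iff.2 (Nat.lt_succ_self n)).ne
  have hfin : Finite M := CP18.finite_of_wf noanti hwflt hwfgt
  refine ⟨hfin, ?_⟩
  letI : Fintype M := Fintype.ofFinite M
  letI instDec : ∀ x y : M, DecidablePred (fun z1 : M => z1 ≤ x ∧ z1 ≤ y) :=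
    fun x y z1 => Classical.propDecidable _
  letI lat : Lattice M :=
    { sl with
      inf := fun x y => (Finset.univ.filter fun z1 => z1 ≤ x ∧ z1 ≤ y).sup id
      inf_le_left := fun x y => Finset.sup_le fun z hz => ((Finset.mem_filter.1 hz).2).1
      inf_le_right := fun x y => Finset.sup_le fun z hz => ((Finset.mem_filter.1 hz).2).2
      le_inf := fun x y z h1 h2 =>
        Finset.le_sup (f := id) (Finset.mem_filter.2 ⟨Finset.mem_univ x, h1, h2⟩) }
  letI dl : DistribLattice M := DistribLattice.ofInfSupLe (fun x y z => by
    rcases jp (x ⊓ (y ⊔ z)) y z inf_le_right with hh | hh | hh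
    · exact le_sup_of_le_left (le_inf inf_le_left hh)
    · exact le_sup_of_le_right (le_inf inf_le_left hh)
    · have hX : y ⊔ z ≤ x := hh ▸ inf_le_left
      calc x ⊓ (y ⊔ z) ≤ y ⊔ z := inf_le_right
        _ ≤ (x ⊓ y) ⊔ (x ⊓ z) :=
          sup_le_sup (le_inf (le_trans le_sup_left hX) le_rfl)
            (le_inf (le_trans le_sup_right hX) le_rfl))
  exact ⟨dl, fun a b => rfl⟩
end

section
/- Every ideal-simple left CP-semiring is congruence-simple (and hence simple, i.e., simultaneously congruence-simple and ideal-simple). -/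
universe u

/-!
Let `c ≠ ⊤` be a congruence on `S`. The quotient `S/c` is a cyclic left `S`-module generated by `1`,
so it is projective, and a splitting of `S → S/c` sends `1` to some `e` with `[e] = 1`,
in particular `e ≠ 0`. Since the splitting is `S`-linear, `c a b` forces `a * e = b * e`.
The elements `x` with `a * x = b * x` whenever `c a b` form a two-sided ideal containing `e`;
by ideal-simplicity it contains `1`, and then `c a b` forces `a = b`.
-/

namespace Module.Projective

theorem exists_smul_eq_self_and_mul_eq_mul {S M : Type*} [Semiring S] [AddCommMonoid M]
    [Module S M] [Module.Projective S M] {m : M} (hm : Submodule.span S {m} = ⊤) :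
    ∃ e : S, e • m = m ∧ ∀ a b : S, a • m = b • m → a * e = b * e := by
  have hsurj : Function.Surjective (LinearMap.toSpanSingleton S M m) := by
    rw [← LinearMap.range_eq_top, LinearMap.range_toSpanSingleton, hm]
  obtain ⟨ν, hν⟩ := Module.projective_lifting_property _ LinearMap.id hsurj
  refine ⟨ν m, LinearMap.congr_fun hν m, fun a b hab => ?_⟩
  simpa using congr_arg ν hab

end Module.Projective

namespace RingCon

variable {S : Type*} [Semiring S] (c : RingCon S)

instance : Module S c.Quotient where
  add_smul r s := Quotient.ind' fun x => congr_arg toQuotient (add_smul r s x)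
  zero_smul := Quotient.ind' fun x => congr_arg toQuotient (zero_smul S x)

theorem smul_one_quotient (a : S) : a • (1 : c.Quotient) = a := by
  rw [← coe_one, ← coe_smul, smul_eq_mul, mul_one]

theorem span_one_quotient : Submodule.span S {(1 : c.Quotient)} = ⊤ :=
  Submodule.eq_top_iff'.2 <| Quotient.ind' fun a =>
    Submodule.mem_span_singleton.2 ⟨a, c.smul_one_quotient a⟩

/-- For the congruence of an ideal `I` of a ring, this is the right annihilator of `I`. -/
def rightAnnihilator : AddSubmonoid S where
  carrier := {x | ∀ a b, c a b → a * x = b * x}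
  zero_mem' _ _ _ := by simp only [mul_zero]
  add_mem' hx hy a b hab := by simp only [mul_add, hx a b hab, hy a b hab]

variable {c}

theorem mul_mem_rightAnnihilator :
    ∀ x ∈ c.rightAnnihilator, ∀ s : S, s * x ∈ c.rightAnnihilator ∧ x * s ∈ c.rightAnnihilator := by
  intro x hx s
  refine ⟨fun a b hab => ?_, fun a b hab => ?_⟩
  · simpa only [mul_assoc] using hx (a * s) (b * s) (c.mul hab (c.refl s))
  · rw [← mul_assoc, ← mul_assoc, hx a b hab]

theorem eq_bot_of_one_mem_rightAnnihilator (h : 1 ∈ c.rightAnnihilator) : c = ⊥ :=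
  RingCon.ext fun a b => ⟨fun hab => by simpa using h a b hab, fun hab => hab ▸ c.refl a⟩

theorem exists_coe_eq_one_mem_rightAnnihilator [Module.Projective S c.Quotient] :
    ∃ e : S, (e : c.Quotient) = 1 ∧ e ∈ c.rightAnnihilator := by
  obtain ⟨e, he, hmul⟩ :=
    Module.Projective.exists_smul_eq_self_and_mul_eq_mul c.span_one_quotient
  refine ⟨e, c.smul_one_quotient e ▸ he, fun a b hab => hmul a b ?_⟩
  simpa only [smul_one_quotient] using c.eq.2 hab

end RingCon

/-- every ideal-simple left CP-semiring is congruence-simple, and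
hence simple (both congruence-simple and ideal-simple). -/
theorem congruenceSimple_of_idealSimple_leftCPSemiring
    (S : Type u) [Semiring S]
    (hCP : IsLeftCPSemiring S) (hI : IsIdealSimple S) :
    IsCongruenceSimple S ∧ IsIdealSimple S := by
  refine ⟨⟨hI.1, fun c => or_iff_not_imp_right.2 fun hc => ?_⟩, hI⟩
  have := RingCon.nontrivial_quotient.2 hc
  have := hCP c.Quotient ⟨1, c.span_one_quotient⟩
  obtain ⟨e, he1, he⟩ := c.exists_coe_eq_one_mem_rightAnnihilator
  have he0 : e ≠ 0 := by
    rintro rfl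
    simp at he1
  have htop : c.rightAnnihilator = ⊤ :=
    (hI.2 _ RingCon.mul_mem_rightAnnihilator).resolve_left
      fun h => he0 ((AddSubmonoid.mem_bot).1 (h ▸ he))
  exact RingCon.eq_bot_of_one_mem_rightAnnihilator (htop ▸ AddSubmonoid.mem_top 1)
end
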